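/- arXiv:2002.08246 — 8 statements merged into one kernel-verified Lean document; each statement's English description precedes it below -/
import Mathlib

section
/- Let $c > 0$, $\theta > 0$, $\beta > 0$ be reals such that $1 + \theta - \beta > c\, e^{(1-c)/c}$. Then the function $f(t) := \frac{\log(t + 1 + \theta)}{(t+\beta)^c}$ is monotonically decreasing on $[0, +\infty)$. -/
/-!
Put `x = t + 1 + θ`. The sign of `f'(t)` is that of `(t + β) - c x log x`, and
`x ↦ c x log x - x` attains its minimum `-c e^{(1-c)/c}` at `x = e^{(1-c)/c}`, so the
hypothesis gives `c x log x ≥ x - (1 + θ - β) = t + β` for every `x > 0`.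
-/

open Real Set

theorem sub_mul_exp_le_mul_mul_log {c x : ℝ} (hc : 0 < c) (hx : 0 < x) :
    x - c * exp ((1 - c) / c) ≤ c * (x * log x) := by
  have hx₀ : 0 < exp ((1 - c) / c) := exp_pos _
  have hlog := log_le_sub_one_of_pos (div_pos hx₀ hx)
  rw [log_div hx₀.ne' hx.ne', log_exp] at hlog
  have key : c * x * ((1 - c) / c - log x) ≤ c * x * (exp ((1 - c) / c) / x - 1) :=
    mul_le_mul_of_nonneg_left hlog (by positivity)
  have lhs : c * x * ((1 - c) / c - log x) = x - c * x - c * (x * log x) := by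
    field_simp
  have rhs : c * x * (exp ((1 - c) / c) / x - 1) = c * exp ((1 - c) / c) - c * x := by
    field_simp
  linarith

theorem hasDerivAt_log_add_div_rpow_add {a b c t : ℝ} (ha : t + a ≠ 0) (hb : 0 < t + b) :
    HasDerivAt (fun t => log (t + a) / (t + b) ^ c)
      (((t + b) ^ c / (t + a) - c * (t + b) ^ (c - 1) * log (t + a)) / ((t + b) ^ c) ^ 2) t := by
  have hlog : HasDerivAt (fun t => log (t + a)) (1 / (t + a)) t :=
    ((hasDerivAt_id t).add_const a).log ha
  have hpow : HasDerivAt (fun t => (t + b) ^ c) (1 * c * (t + b) ^ (c - 1)) t :=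
    ((hasDerivAt_id t).add_const b).rpow_const (Or.inl hb.ne')
  exact (hlog.div hpow (rpow_pos_of_pos hb c).ne').congr_deriv (by ring)

theorem rpow_div_sub_mul_rpow_sub_one_mul_log_nonpos {a b c t : ℝ} (ha : 0 < t + a)
    (hb : 0 < t + b) (h : t + b ≤ c * ((t + a) * log (t + a))) :
    (t + b) ^ c / (t + a) - c * (t + b) ^ (c - 1) * log (t + a) ≤ 0 := by
  have hsplit : (t + b) ^ c = (t + b) ^ (c - 1) * (t + b) := by
    rw [← rpow_add_one hb.ne']
    ring_nf
  rw [sub_nonpos, hsplit, div_le_iff₀ ha]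
  calc (t + b) ^ (c - 1) * (t + b)
      ≤ (t + b) ^ (c - 1) * (c * ((t + a) * log (t + a))) :=
        mul_le_mul_of_nonneg_left h (rpow_pos_of_pos hb _).le
    _ = c * (t + b) ^ (c - 1) * log (t + a) * (t + a) := by ring

theorem antitoneOn_log_add_div_rpow_add {a b c : ℝ} (hc : 0 < c) (hb : 0 < b)
    (h : c * exp ((1 - c) / c) < a - b) :
    AntitoneOn (fun t => log (t + a) / (t + b) ^ c) (Ici 0) := by
  have hab : b < a := by linarith [mul_pos hc (exp_pos ((1 - c) / c))]
  have hderiv (t : ℝ) (ht : 0 ≤ t) := hasDerivAt_log_add_div_rpow_add (a := a) (c := c)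
    (by linarith : t + a ≠ 0) (by linarith : 0 < t + b)
  refine antitoneOn_of_hasDerivWithinAt_nonpos (convex_Ici 0)
    (fun t ht => (hderiv t ht).continuousAt.continuousWithinAt)
    (fun t ht => (hderiv t (interior_subset ht)).hasDerivWithinAt) fun t ht => ?_
  have ht : 0 ≤ t := interior_subset ht
  refine div_nonpos_of_nonpos_of_nonneg
    (rpow_div_sub_mul_rpow_sub_one_mul_log_nonpos (by linarith) (by linarith) ?_) (sq_nonneg _)
  linarith [sub_mul_exp_le_mul_mul_log hc (by linarith : 0 < t + a)]

theorem stmt3_general (c θ β : ℝ) (hc : 0 < c) (hβ : 0 < β)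
    (h : c * Real.exp ((1 - c) / c) < 1 + θ - β) :
    ∀ s t : ℝ, 0 ≤ s → s ≤ t →
      Real.log (t + 1 + θ) / (t + β) ^ c ≤ Real.log (s + 1 + θ) / (s + β) ^ c := by
  intro s t hs hst
  have hanti := antitoneOn_log_add_div_rpow_add (a := 1 + θ) hc hβ h
  simpa only [add_assoc] using hanti (mem_Ici.mpr hs) (mem_Ici.mpr (hs.trans hst)) hst

theorem stmt3 (c θ β : ℝ) (hc : 0 < c) (hθ : 0 < θ) (hβ : 0 < β)
    (h : c * Real.exp ((1 - c) / c) < 1 + θ - β) :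
    ∀ s t : ℝ, 0 ≤ s → s ≤ t →
      Real.log (t + 1 + θ) / (t + β) ^ c ≤ Real.log (s + 1 + θ) / (s + β) ^ c :=
  stmt3_general c θ β hc hβ h
end

section
/- Let $\{Y_t\}_{t\geq 1}$ and $\{Z_t\}_{t\geq 1}$ be nonnegative real sequences, $m, q$ positive numbers with $q > m$, and $\rho, \alpha, \beta, \gamma, D$ positive constants with $\alpha m \leq 1/2$. Set $\eta_t := \gamma/(t+\beta)^\alpha$ and suppose $Y_{t+1} \leq Y_t - \rho \eta_t^m Z_t + D \eta_t^q$ for all $t \geq 1$. Suppose further $Y_t \leq C + H\log(t+\theta)$ for constants $C > 0$, $H \geq 0$, $\theta > 0$ with $1 + \theta - \beta > (1-\alpha m)e^{\alpha m/(1-\alpha m)}$, and that $\alpha(q-m) = 1$. Then for all $T \geq 1$: $\frac{1}{T}\sum_{t=1}^T Z_t \leq \frac{1}{T}\Big[\frac{(1+\beta)^{\alpha m} Y_1}{\rho\gamma^m} + \frac{C(T-1+\beta)^{\alpha m}}{2\rho\alpha m \gamma^m} + \frac{H(T-1+\beta)^{\alpha m}\log(T+\theta)}{2\rho\alpha m\gamma^m}\Big]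 + \frac{D\gamma^{q-m}}{\rho}\cdot\frac{\log(T+\beta)-\log(\beta)}{T}$. -/
/-!
Dividing the descent inequality by `ρ η_t^m` gives, with `w_t = (t + β)^{αm}` and
`α (q - m) = 1`,
`Z_t ≤ (Y_t - Y_{t+1}) w_t / (ρ γ^m) + (D γ^{q-m} / ρ) / (t + β)`.
Summation by parts turns `∑ (Y_t - Y_{t+1}) w_t` into `Y_1 w_1 - Y_{T+1} w_T` plus
`∑ Y_t (w_t - w_{t-1})`, in which `Y_t ≤ C + H log (T + θ)` and the increments telescope
to `w_T - w_1 ≤ (T - 1 + β)^{αm}` by subadditivity of `x ↦ x^{αm}`. The harmonic-type sum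
`∑ 1/(t + β)` is bounded by `log (T + β) - log β`, and `2αm ≤ 1` absorbs the remaining
factor.
-/

open Real Finset

lemma div_rpow_rpow_eq {γ x : ℝ} (hγ : 0 ≤ γ) (hx : 0 ≤ x) (α r : ℝ) :
    (γ / x ^ α) ^ r = γ ^ r / x ^ (α * r) := by
  rw [div_rpow hγ (rpow_nonneg hx α), ← rpow_mul hx]

lemma le_of_descent_step {Y Y' Z m q ρ α γ D x : ℝ} (hρ : 0 < ρ) (hγ : 0 < γ) (hx : 0 < x)
    (hαqm : α * (q - m) = 1)
    (h : Y' ≤ Y - ρ * (γ / x ^ α) ^ m * Z + D * (γ / x ^ α) ^ q) :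
    Z ≤ (Y - Y') * x ^ (α * m) / (ρ * γ ^ m) + D * γ ^ (q - m) / ρ * (1 / x) := by
  set η := γ / x ^ α
  have hη : 0 < η := by positivity
  have hηm : η ^ m = γ ^ m / x ^ (α * m) := div_rpow_rpow_eq hγ.le hx.le α m
  have hηqm : η ^ (q - m) = γ ^ (q - m) / x := by
    rw [div_rpow_rpow_eq hγ.le hx.le, hαqm, rpow_one]
  have hηq : η ^ q = η ^ m * (γ ^ (q - m) / x) := by
    rw [← hηqm, ← rpow_add hη, add_sub_cancel]
  rw [hηq] at h
  have hηmρ : 0 < ρ * η ^ m := by positivity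
  calc Z = ρ * η ^ m * Z / (ρ * η ^ m) := by field_simp
    _ ≤ (Y - Y' + D * (η ^ m * (γ ^ (q - m) / x))) / (ρ * η ^ m) := by gcongr; linarith
    _ = (Y - Y') * x ^ (α * m) / (ρ * γ ^ m) + D * γ ^ (q - m) / ρ * (1 / x) := by
      rw [hηm]; field_simp

lemma sum_Icc_one_div_add_le_log {β : ℝ} (hβ : 0 < β) (T : ℕ) :
    ∑ t ∈ Icc 1 T, 1 / ((t : ℝ) + β) ≤ log (T + β) - log β := by
  induction T with
  | zero => simp
  | succ n ih =>
    have hx : 0 < (n : ℝ) + β := by positivity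
    have hstep : 1 / ((n : ℝ) + 1 + β) ≤ log ((n : ℝ) + 1 + β) - log ((n : ℝ) + β) := by
      have h := one_sub_inv_le_log_of_pos
        (x := ((n : ℝ) + 1 + β) / ((n : ℝ) + β)) (by positivity)
      rw [log_div (by positivity) hx.ne', inv_div] at h
      convert h using 1
      field_simp
      ring
    rw [sum_Icc_succ_top (by omega)]
    push_cast
    linarith

lemma sum_Icc_sub_mul_le {Y w : ℕ → ℝ} {L : ℝ} (hw : Monotone w) {T : ℕ} (hT : 1 ≤ T)
    (hY : ∀ t ∈ Icc 2 T, Y t ≤ L) :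
    ∑ t ∈ Icc 1 T, (Y t - Y (t + 1)) * w t ≤
      Y 1 * w 1 - Y (T + 1) * w T + L * (w T - w 1) := by
  induction T, hT using Nat.le_induction with
  | base => simp [sub_mul]
  | succ n hn ih =>
    have hYn : Y (n + 1) ≤ L := hY (n + 1) (mem_Icc.mpr ⟨by omega, le_rfl⟩)
    have ih' := ih fun t ht => hY t (mem_Icc.mpr ⟨(mem_Icc.mp ht).1, by grind⟩)
    have hwn : w n ≤ w (n + 1) := hw n.le_succ
    rw [sum_Icc_succ_top (by omega)]
    nlinarith

lemma rpow_add_one_sub_rpow_le {p β x : ℝ} (hp0 : 0 ≤ p) (hp1 : p ≤ 1) (hβ : 0 ≤ β)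
    (hx : 0 ≤ x) : (x + 1) ^ p - (1 + β) ^ p ≤ x ^ p := by
  have hsub := rpow_add_le_add_rpow hx zero_le_one hp0 hp1
  have hone : 1 ≤ (1 + β) ^ p := one_le_rpow (by linarith) hp0
  rw [one_rpow] at hsub
  linarith

lemma sum_le_of_descent {Y Z : ℕ → ℝ} {m q ρ α β γ D L : ℝ} (hp0 : 0 ≤ α * m)
    (hp1 : α * m ≤ 1) (hρ : 0 < ρ) (hβ : 0 < β) (hγ : 0 < γ) (hD : 0 ≤ D)
    (hαqm : α * (q - m) = 1) {T : ℕ} (hT : 1 ≤ T)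
    (hrec : ∀ t ∈ Icc 1 T, Y (t + 1) ≤
      Y t - ρ * (γ / ((t : ℝ) + β) ^ α) ^ m * Z t + D * (γ / ((t : ℝ) + β) ^ α) ^ q)
    (hY : ∀ t ∈ Icc 2 T, Y t ≤ L) (hL : 0 ≤ L) (hYT : 0 ≤ Y (T + 1)) :
    ∑ t ∈ Icc 1 T, Z t ≤
      ((1 + β) ^ (α * m) * Y 1 + L * ((T : ℝ) - 1 + β) ^ (α * m)) / (ρ * γ ^ m)
        + D * γ ^ (q - m) / ρ * (log (T + β) - log β) := by
  set w : ℕ → ℝ := fun t => ((t : ℝ) + β) ^ (α * m)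
  have hw : Monotone w := fun s t hst => by
    simp only [w]
    gcongr
  have hsteps : ∑ t ∈ Icc 1 T, Z t ≤
      (∑ t ∈ Icc 1 T, (Y t - Y (t + 1)) * w t) / (ρ * γ ^ m)
      + D * γ ^ (q - m) / ρ * ∑ t ∈ Icc 1 T, 1 / ((t : ℝ) + β) := by
    rw [sum_div, mul_sum, ← sum_add_distrib]
    exact sum_le_sum fun t ht => le_of_descent_step hρ hγ (by positivity) hαqm (hrec t ht)
  have habel := sum_Icc_sub_mul_le hw hT hY
  have hincr : w T - w 1 ≤ ((T : ℝ) - 1 + β) ^ (α * m) := by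
    have hT' : (1 : ℝ) ≤ T := by exact_mod_cast hT
    have h := rpow_add_one_sub_rpow_le hp0 hp1 hβ.le (x := (T : ℝ) - 1 + β) (by linarith)
    simp only [w, Nat.cast_one]
    convert h using 3
    ring
  have hYw : 0 ≤ Y (T + 1) * w T := by positivity
  have hw1 : w 1 = (1 + β) ^ (α * m) := by simp [w]
  rw [hw1] at habel hincr
  refine hsteps.trans (add_le_add ?_ ?_)
  · gcongr
    linarith [mul_le_mul_of_nonneg_left hincr hL]
  · gcongr
    exact sum_Icc_one_div_add_le_log hβ T

theorem stmt5_general (Y Z : ℕ → ℝ) (m q ρ α β γ D C H θ : ℝ) (η : ℕ → ℝ)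
    (hm : 0 < m) (hρ : 0 < ρ) (hα : 0 < α) (hβ : 0 < β) (hγ : 0 < γ)
    (hD : 0 < D) (hH : 0 ≤ H) (hθ : 0 < θ)
    (hαm : α * m ≤ 1 / 2)
    (hαqm : α * (q - m) = 1)
    (hYnn : ∀ t : ℕ, 1 ≤ t → 0 ≤ Y t)
    (hη : ∀ t : ℕ, η t = γ / ((t : ℝ) + β) ^ α)
    (hrec : ∀ t : ℕ, 1 ≤ t → Y (t + 1) ≤ Y t - ρ * η t ^ m * Z t + D * η t ^ q)
    (hbound : ∀ t : ℕ, 1 ≤ t → Y t ≤ C + H * Real.log ((t : ℝ) + θ)) :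
    ∀ T : ℕ, 1 ≤ T →
      (1 / (T : ℝ)) * ∑ t ∈ Finset.Icc 1 T, Z t ≤
        (1 / (T : ℝ)) * ((1 + β) ^ (α * m) * Y 1 / (ρ * γ ^ m)
          + C * ((T : ℝ) - 1 + β) ^ (α * m) / (2 * ρ * α * m * γ ^ m)
          + H * ((T : ℝ) - 1 + β) ^ (α * m) * Real.log ((T : ℝ) + θ) / (2 * ρ * α * m * γ ^ m))
        + (D * γ ^ (q - m) / ρ) * ((Real.log ((T : ℝ) + β) - Real.log β) / (T : ℝ)) := by
  intro T hT
  have hp : 0 < α * m := mul_pos hα hm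
  set L := C + H * log ((T : ℝ) + θ)
  have hY : ∀ t ∈ Icc 2 T, Y t ≤ L := fun t ht => by
    have htT : (t : ℝ) ≤ T := by exact_mod_cast (mem_Icc.mp ht).2
    refine (hbound t (by grind)).trans ?_
    simp only [L]
    gcongr
  have hL : 0 ≤ L := (hYnn T hT).trans (hbound T hT)
  have hsum := sum_le_of_descent hp.le (by linarith) hρ hβ hγ hD.le hαqm hT
    (fun t ht => hη t ▸ hrec t (mem_Icc.mp ht).1) hY hL (hYnn (T + 1) (by omega))
  have hhalf : L * ((T : ℝ) - 1 + β) ^ (α * m) / (ρ * γ ^ m) ≤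
      L * ((T : ℝ) - 1 + β) ^ (α * m) / (2 * ρ * α * m * γ ^ m) := by
    have hT' : (1 : ℝ) ≤ T := by exact_mod_cast hT
    apply div_le_div_of_nonneg_left (by positivity) (by positivity)
    nlinarith [show 0 < ρ * γ ^ m by positivity]
  calc 1 / (T : ℝ) * ∑ t ∈ Icc 1 T, Z t
      ≤ 1 / (T : ℝ) * (((1 + β) ^ (α * m) * Y 1 + L * ((T : ℝ) - 1 + β) ^ (α * m))
          / (ρ * γ ^ m) + D * γ ^ (q - m) / ρ * (log (T + β) - log β)) := by gcongr
    _ ≤ 1 / (T : ℝ) * ((1 + β) ^ (α * m) * Y 1 / (ρ * γ ^ m)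
        + L * ((T : ℝ) - 1 + β) ^ (α * m) / (2 * ρ * α * m * γ ^ m)
        + D * γ ^ (q - m) / ρ * (log (T + β) - log β)) := by
      rw [add_div]
      exact mul_le_mul_of_nonneg_left (by linarith) (by positivity)
    _ = _ := by ring

theorem stmt5 (Y Z : ℕ → ℝ) (m q ρ α β γ D C H θ : ℝ) (η : ℕ → ℝ)
    (hm : 0 < m) (hqm : m < q) (hρ : 0 < ρ) (hα : 0 < α) (hβ : 0 < β) (hγ : 0 < γ)
    (hD : 0 < D) (hC : 0 < C) (hH : 0 ≤ H) (hθ : 0 < θ)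
    (hαm : α * m ≤ 1 / 2)
    (hθβ : (1 - α * m) * Real.exp (α * m / (1 - α * m)) < 1 + θ - β)
    (hαqm : α * (q - m) = 1)
    (hYnn : ∀ t : ℕ, 1 ≤ t → 0 ≤ Y t) (hZnn : ∀ t : ℕ, 1 ≤ t → 0 ≤ Z t)
    (hη : ∀ t : ℕ, η t = γ / ((t : ℝ) + β) ^ α)
    (hrec : ∀ t : ℕ, 1 ≤ t → Y (t + 1) ≤ Y t - ρ * η t ^ m * Z t + D * η t ^ q)
    (hbound : ∀ t : ℕ, 1 ≤ t → Y t ≤ C + H * Real.log ((t : ℝ) + θ)) :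
    ∀ T : ℕ, 1 ≤ T →
      (1 / (T : ℝ)) * ∑ t ∈ Finset.Icc 1 T, Z t ≤
        (1 / (T : ℝ)) * ((1 + β) ^ (α * m) * Y 1 / (ρ * γ ^ m)
          + C * ((T : ℝ) - 1 + β) ^ (α * m) / (2 * ρ * α * m * γ ^ m)
          + H * ((T : ℝ) - 1 + β) ^ (α * m) * Real.log ((T : ℝ) + θ) / (2 * ρ * α * m * γ ^ m))
        + (D * γ ^ (q - m) / ρ) * ((Real.log ((T : ℝ) + β) - Real.log β) / (T : ℝ)) :=
  stmt5_general Y Z m q ρ α β γ D C H θ η hm hρ hα hβ hγ hD hH hθ hαm hαqm hYnn hη hrec hbound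
end

section
/- Let $f(\cdot; i) : \mathbb{R}^d \to \mathbb{R}$ for $i \in [n]$ each be $L$-smooth (gradient $L$-Lipschitz), and let $w_*$ be a fixed point with variance $\sigma_*^2 := \frac{1}{n}\sum_{i=1}^n \|\nabla f(w_*; i)\|^2$. Let $\pi$ be a permutation of $[n]$, $\eta > 0$, and define iterates $w_0 := w$ arbitrary and $w_i := w_{i-1} - \frac{\eta}{n}\nabla f(w_{i-1}; \pi(i))$ for $i = 1, \dots, n$. Then for every $1 \leq i \leq n$, assuming $\nabla F(w_*) = 0$ where $F := \frac{1}{n}\sum_{i=1}^n f(\cdot; i)$: $\|w_i - w_0\|^2 \leq \frac{2L^2\eta^2 i}{n^2}\sum_{j=0}^{i-1}\|w_j - w_*\|^2 + \frac{2\eta^2(n-i)}{n}\sigma_*^2$. -/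
/-- ‖∑ v‖² ≤ card * ∑ ‖v‖² -/
lemma norm_sum_sq_le_card_mul {E : Type*} [NormedAddCommGroup E]
    (s : Finset ℕ) (v : ℕ → E) :
    ‖∑ j ∈ s, v j‖ ^ 2 ≤ (s.card : ℝ) * ∑ j ∈ s, ‖v j‖ ^ 2 := by
  have h1 : ‖∑ j ∈ s, v j‖ ≤ ∑ j ∈ s, ‖v j‖ := norm_sum_le _ _
  have h2 : (∑ j ∈ s, ‖v j‖) ^ 2 ≤ (s.card : ℝ) * ∑ j ∈ s, ‖v j‖ ^ 2 := by
    exact_mod_cast sq_sum_le_card_mul_sum_sq (s := s) (f := fun j => ‖v j‖)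
  calc ‖∑ j ∈ s, v j‖ ^ 2 ≤ (∑ j ∈ s, ‖v j‖) ^ 2 := by
        apply pow_le_pow_left₀ (norm_nonneg _) h1
    _ ≤ _ := h2

theorem stmt7 {E : Type*} [NormedAddCommGroup E] [InnerProductSpace ℝ E] [CompleteSpace E]
    (n : ℕ) (hn : 1 ≤ n) (f : Fin n → E → ℝ) (L : ℝ) (hL : 0 < L)
    (hsmooth : ∀ i : Fin n, ∀ w v : E,
      ‖gradient (f i) w - gradient (f i) v‖ ≤ L * ‖w - v‖)
    (wstar : E) (hstat : ∑ i : Fin n, gradient (f i) wstar = 0)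
    (π : Equiv.Perm (Fin n)) (η : ℝ) (hη : 0 < η) (w : ℕ → E)
    (hstep : ∀ i : Fin n, w (i.val + 1) = w i.val - (η / n) • gradient (f (π i)) (w i.val)) :
    ∀ i : ℕ, 1 ≤ i → i ≤ n →
      ‖w i - w 0‖ ^ 2 ≤
        2 * L ^ 2 * η ^ 2 * (i : ℝ) / (n : ℝ) ^ 2 *
          ∑ j ∈ Finset.range i, ‖w j - wstar‖ ^ 2
        + 2 * η ^ 2 * ((n : ℝ) - (i : ℝ)) / (n : ℝ) *
          ((1 / (n : ℝ)) * ∑ i : Fin n, ‖gradient (f i) wstar‖ ^ 2) := by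
  intro i hi1 hin
  have hn0 : (0:ℝ) < n := by exact_mod_cast lt_of_lt_of_le Nat.zero_lt_one hn
  set c : ℝ := η / n with hc
  set g : ℕ → E := fun j => if h : j < n then gradient (f (π ⟨j, h⟩)) (w j) else 0 with hg
  set gs : ℕ → E := fun j => if h : j < n then gradient (f (π ⟨j, h⟩)) wstar else 0 with hgs
  -- iterate formula
  have hA : ∀ m, m ≤ n → w m = w 0 - c • ∑ j ∈ Finset.range m, g j := by
    intro m
    induction m with
    | zero => intro _; simp
    | succ k ih =>
      intro hk
      have hk' : k < n := hk
      have hs := hstep ⟨k, hk'⟩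
      simp only [Fin.val_mk] at hs
      have hgk : g k = gradient (f (π ⟨k, hk'⟩)) (w k) := by simp [hg, hk']
      rw [hs, Finset.sum_range_succ, hgk, ih (le_of_lt hk'), smul_add]
      abel
  -- Lipschitz per-term bound
  have hlip : ∀ j ∈ Finset.range i, ‖g j - gs j‖ ^ 2 ≤ L ^ 2 * ‖w j - wstar‖ ^ 2 := by
    intro j hj
    have hjn : j < n := lt_of_lt_of_le (Finset.mem_range.mp hj) hin
    have : ‖g j - gs j‖ ≤ L * ‖w j - wstar‖ := by
      simp only [hg, hgs, dif_pos hjn]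
      exact hsmooth _ _ _
    calc ‖g j - gs j‖ ^ 2 ≤ (L * ‖w j - wstar‖) ^ 2 := by
          apply pow_le_pow_left₀ (norm_nonneg _) this
      _ = L ^ 2 * ‖w j - wstar‖ ^ 2 := by ring
  -- total stationary sum is zero
  have hsum0 : ∑ j ∈ Finset.range n, gs j = 0 := by
    have : ∑ j ∈ Finset.range n, gs j = ∑ j : Fin n, gradient (f (π j)) wstar := by
      rw [Finset.sum_range fun j => gs j]
      apply Finset.sum_congr rfl
      intro j _
      simp [hgs, j.isLt]
    rw [this, Equiv.sum_comp π (fun k => gradient (f k) wstar), hstat]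
  set A : E := ∑ j ∈ Finset.range i, (g j - gs j) with hAdef
  set B : E := ∑ j ∈ Finset.range i, gs j with hBdef
  -- bound on A
  have hAb : ‖A‖ ^ 2 ≤ (i : ℝ) * (L ^ 2 * ∑ j ∈ Finset.range i, ‖w j - wstar‖ ^ 2) := by
    calc ‖A‖ ^ 2 ≤ ((Finset.range i).card : ℝ) * ∑ j ∈ Finset.range i, ‖g j - gs j‖ ^ 2 :=
          norm_sum_sq_le_card_mul _ _
      _ ≤ (i : ℝ) * (L ^ 2 * ∑ j ∈ Finset.range i, ‖w j - wstar‖ ^ 2) := by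
          rw [Finset.card_range]
          apply mul_le_mul_of_nonneg_left _ (Nat.cast_nonneg i)
          calc ∑ j ∈ Finset.range i, ‖g j - gs j‖ ^ 2
              ≤ ∑ j ∈ Finset.range i, L ^ 2 * ‖w j - wstar‖ ^ 2 := Finset.sum_le_sum hlip
            _ = L ^ 2 * ∑ j ∈ Finset.range i, ‖w j - wstar‖ ^ 2 := by rw [Finset.mul_sum]
  -- bound on B
  have hBeq : B = -∑ j ∈ Finset.Ico i n, gs j := by
    have h := Finset.sum_range_add_sum_Ico gs hin
    rw [hsum0] at h
    exact eq_neg_of_add_eq_zero_left h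
  have hGsum : ∑ j ∈ Finset.range n, ‖gs j‖ ^ 2 = ∑ k : Fin n, ‖gradient (f k) wstar‖ ^ 2 := by
    have : ∑ j ∈ Finset.range n, ‖gs j‖ ^ 2
        = ∑ j : Fin n, ‖gradient (f (π j)) wstar‖ ^ 2 := by
      rw [Finset.sum_range fun j => ‖gs j‖ ^ 2]
      apply Finset.sum_congr rfl
      intro j _
      simp [hgs, j.isLt]
    rw [this, Equiv.sum_comp π (fun k => ‖gradient (f k) wstar‖ ^ 2)]
  have hBb : ‖B‖ ^ 2 ≤ ((n : ℝ) - (i : ℝ)) * ∑ k : Fin n, ‖gradient (f k) wstar‖ ^ 2 := by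
    rw [hBeq, norm_neg]
    calc ‖∑ j ∈ Finset.Ico i n, gs j‖ ^ 2
        ≤ ((Finset.Ico i n).card : ℝ) * ∑ j ∈ Finset.Ico i n, ‖gs j‖ ^ 2 :=
          norm_sum_sq_le_card_mul _ _
      _ ≤ ((n : ℝ) - (i : ℝ)) * ∑ k : Fin n, ‖gradient (f k) wstar‖ ^ 2 := by
          rw [Nat.card_Ico]
          have hcast : ((n - i : ℕ) : ℝ) = (n : ℝ) - (i : ℝ) := Nat.cast_sub hin
          rw [hcast, ← hGsum]
          apply mul_le_mul_of_nonneg_left _ (by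
            rw [← hcast]; exact Nat.cast_nonneg _)
          apply Finset.sum_le_sum_of_subset_of_nonneg
          · intro x hx
            exact Finset.mem_range.mpr (Finset.mem_Ico.mp hx).2
          · intro x _ _; positivity
  -- assemble
  have hsplit : ∑ j ∈ Finset.range i, g j = A + B := by
    rw [hAdef, hBdef, ← Finset.sum_add_distrib]
    apply Finset.sum_congr rfl
    intro j _; abel
  have hwi : w i - w 0 = -(c • (A + B)) := by
    rw [hA i hin, hsplit]; abel
  have hnorm : ‖w i - w 0‖ ^ 2 = c ^ 2 * ‖A + B‖ ^ 2 := by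
    rw [hwi, norm_neg, norm_smul, mul_pow, Real.norm_eq_abs, sq_abs]
  have hAB : ‖A + B‖ ^ 2 ≤ 2 * ‖A‖ ^ 2 + 2 * ‖B‖ ^ 2 := by
    have h1 : ‖A + B‖ ≤ ‖A‖ + ‖B‖ := norm_add_le _ _
    nlinarith [sq_nonneg (‖A‖ - ‖B‖), pow_le_pow_left₀ (norm_nonneg (A + B)) h1 2]
  have hc2 : (0:ℝ) ≤ c ^ 2 := sq_nonneg c
  have key : ‖w i - w 0‖ ^ 2 ≤ c ^ 2 * (2 * ((i : ℝ) * (L ^ 2 * ∑ j ∈ Finset.range i, ‖w j - wstar‖ ^ 2))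
      + 2 * (((n : ℝ) - (i : ℝ)) * ∑ k : Fin n, ‖gradient (f k) wstar‖ ^ 2)) := by
    rw [hnorm]
    apply mul_le_mul_of_nonneg_left _ hc2
    calc ‖A + B‖ ^ 2 ≤ 2 * ‖A‖ ^ 2 + 2 * ‖B‖ ^ 2 := hAB
      _ ≤ _ := by
        have := hAb; have := hBb; linarith
  refine key.trans (le_of_eq ?_)
  rw [hc]
  have hne : (n : ℝ) ≠ 0 := ne_of_gt hn0
  field_simp
end

section
/- Under the setting of one epoch of the shuffling gradient method ($w_0$ arbitrary, $w_i := w_{i-1} - \frac{\eta}{n}\nabla f(w_{i-1};\pi(i))$, each $f(\cdot;i)$ being $L$-smooth, $w_*$ a stationary point of $F = \frac1n\sum_i f(\cdot;i)$ with variance $\sigma_*^2 = \frac1n\sum_i\|\nabla f(w_*;i)\|^2$), if $0 < \eta \leq \frac{1}{2L}$, then for every $1 \leq i \leq n$: $\sum_{j=0}^{i-1}\|w_j - w_*\|^2 \leq 4i\big(\|w_0 - w_*\|^2 + 2\eta^2\sigma_*^2\big)$. -/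
set_option maxHeartbeats 1000000 in
theorem stmt8 {E : Type*} [NormedAddCommGroup E] [InnerProductSpace ℝ E] [CompleteSpace E]
    (n : ℕ) (hn : 1 ≤ n) (f : Fin n → E → ℝ) (L : ℝ) (hL : 0 < L)
    (hsmooth : ∀ i : Fin n, ∀ w v : E,
      ‖gradient (f i) w - gradient (f i) v‖ ≤ L * ‖w - v‖)
    (wstar : E) (hstat : ∑ i : Fin n, gradient (f i) wstar = 0)
    (π : Equiv.Perm (Fin n)) (η : ℝ) (hη : 0 < η) (hη2 : η ≤ 1 / (2 * L)) (w : ℕ → E)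
    (hstep : ∀ i : Fin n, w (i.val + 1) = w i.val - (η / n) • gradient (f (π i)) (w i.val)) :
    ∀ i : ℕ, 1 ≤ i → i ≤ n →
      ∑ j ∈ Finset.range i, ‖w j - wstar‖ ^ 2 ≤
        4 * (i : ℝ) * (‖w 0 - wstar‖ ^ 2
          + 2 * η ^ 2 * ((1 / (n : ℝ)) * ∑ i : Fin n, ‖gradient (f i) wstar‖ ^ 2)) := by
  intro i hi1 hin
  have hNpos : (0:ℝ) < n := by exact_mod_cast Nat.lt_of_lt_of_le Nat.zero_lt_one hn
  set a : ℕ → ℝ := fun j => ‖w j - wstar‖ with ha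
  set c : ℕ → ℝ := fun k => if h : k < n then ‖gradient (f (π ⟨k, h⟩)) wstar‖ else 0 with hc
  set C : ℝ := ∑ k : Fin n, ‖gradient (f k) wstar‖ ^ 2 with hCdef
  have hanonneg : ∀ j, 0 ≤ a j := fun j => norm_nonneg _
  have hcnonneg : ∀ k, 0 ≤ c k := by
    intro k; simp only [hc]; split <;> [exact norm_nonneg _; exact le_refl 0]
  have hCnonneg : 0 ≤ C := Finset.sum_nonneg fun _ _ => sq_nonneg _
  have hηn : 0 ≤ η / n := le_of_lt (div_pos hη hNpos)
  -- one step bound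
  have hstep' : ∀ k, k < n → a (k+1) ≤ a k + (η/n) * (L * a k + c k) := by
    intro k hk
    have h := hstep ⟨k, hk⟩
    have hck : c k = ‖gradient (f (π ⟨k, hk⟩)) wstar‖ := by simp [hc, hk]
    have hgl : ‖gradient (f (π ⟨k,hk⟩)) (w k)‖ ≤ L * a k + c k := by
      have h1 := hsmooth (π ⟨k,hk⟩) (w k) wstar
      have h2 : ‖gradient (f (π ⟨k,hk⟩)) (w k)‖ ≤
          ‖gradient (f (π ⟨k,hk⟩)) (w k) - gradient (f (π ⟨k,hk⟩)) wstar‖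
            + ‖gradient (f (π ⟨k,hk⟩)) wstar‖ := by
        have := norm_sub_le (gradient (f (π ⟨k,hk⟩)) (w k) - gradient (f (π ⟨k,hk⟩)) wstar)
          (- gradient (f (π ⟨k,hk⟩)) wstar)
        simpa [add_comm] using norm_le_norm_add_norm_sub' (gradient (f (π ⟨k,hk⟩)) (w k))
          (gradient (f (π ⟨k,hk⟩)) wstar)
      rw [hck]
      calc ‖gradient (f (π ⟨k,hk⟩)) (w k)‖ ≤ _ := h2
        _ ≤ L * a k + ‖gradient (f (π ⟨k,hk⟩)) wstar‖ := by
            have := hsmooth (π ⟨k,hk⟩) (w k) wstar; simp only [ha]; linarith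
    have hw : w (k+1) - wstar = (w k - wstar) - (η/n) • gradient (f (π ⟨k,hk⟩)) (w k) := by
      rw [h]; abel
    calc a (k+1) = ‖(w k - wstar) - (η/n) • gradient (f (π ⟨k,hk⟩)) (w k)‖ := by
          simp only [ha]; rw [hw]
      _ ≤ ‖w k - wstar‖ + ‖(η/n) • gradient (f (π ⟨k,hk⟩)) (w k)‖ := norm_sub_le _ _
      _ = a k + (η/n) * ‖gradient (f (π ⟨k,hk⟩)) (w k)‖ := by
          rw [norm_smul, Real.norm_of_nonneg hηn]
      _ ≤ a k + (η/n) * (L * a k + c k) := by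
          have := mul_le_mul_of_nonneg_left hgl hηn; linarith
  -- telescoped bound
  have hsum : ∀ j, j ≤ n → a j ≤ a 0 + (η/n) * ∑ k ∈ Finset.range j, (L * a k + c k) := by
    intro j
    induction j with
    | zero => intro _; simp
    | succ j ih =>
      intro hj
      have hjn : j < n := hj
      have h1 := hstep' j hjn
      have h2 := ih (le_of_lt hjn)
      rw [Finset.sum_range_succ, mul_add]
      linarith
  -- Cauchy-Schwarz
  have hCS : ∀ j : ℕ, (∑ k ∈ Finset.range j, (L * a k + c k))^2 ≤
      (j:ℝ) * ∑ k ∈ Finset.range j, (L * a k + c k)^2 := by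
    intro j
    have := Finset.sum_mul_sq_le_sq_mul_sq (Finset.range j) (fun _ => (1:ℝ))
      (fun k => L * a k + c k)
    simpa using this
  set S : ℝ := ∑ j ∈ Finset.range i, a j ^ 2 with hSdef
  have hSnonneg : 0 ≤ S := Finset.sum_nonneg fun _ _ => sq_nonneg _
  have hCle : ∀ j, j ≤ n → ∑ k ∈ Finset.range j, (c k)^2 ≤ C := by
    intro j hj
    have h1 : ∑ k ∈ Finset.range j, (c k)^2 ≤ ∑ k ∈ Finset.range n, (c k)^2 :=
      Finset.sum_le_sum_of_subset_of_nonneg (Finset.range_subset_range.mpr hj)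
        (fun k _ _ => sq_nonneg _)
    have h2 : ∑ k ∈ Finset.range n, (c k)^2 = C := by
      rw [← Fin.sum_univ_eq_sum_range (fun k => (c k)^2) n]
      have he : ∀ k : Fin n, (c k.val)^2 = ‖gradient (f (π k)) wstar‖^2 := by
        intro k; simp [hc, k.isLt]
      rw [Finset.sum_congr rfl (fun k _ => he k)]
      exact Equiv.sum_comp π (fun k => ‖gradient (f k) wstar‖^2)
    linarith
  have hAle : ∀ j, j ≤ i → ∑ k ∈ Finset.range j, (a k)^2 ≤ S :=
    fun j hj => Finset.sum_le_sum_of_subset_of_nonneg (Finset.range_subset_range.mpr hj)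
      (fun k _ _ => sq_nonneg _)
  -- per-j master bound
  have hmaster : ∀ j, j < i → a j ^ 2 ≤ 2 * a 0 ^ 2 + 4 * (η/n)^2 * j * (L^2 * S + C) := by
    intro j hji
    have hjn : j ≤ n := le_trans (le_of_lt hji) hin
    have h1 := hsum j hjn
    set t : ℝ := ∑ k ∈ Finset.range j, (L * a k + c k) with htdef
    have htnonneg : 0 ≤ t := Finset.sum_nonneg fun k _ =>
      add_nonneg (mul_nonneg hL.le (hanonneg k)) (hcnonneg k)
    have h2 : a j ^ 2 ≤ 2 * a 0 ^ 2 + 2 * ((η/n) * t)^2 := by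
      nlinarith [hanonneg j, hanonneg 0, mul_nonneg hηn htnonneg,
        sq_nonneg (a 0 - (η/n)*t)]
    have h3 : t^2 ≤ (j:ℝ) * ∑ k ∈ Finset.range j, (L * a k + c k)^2 := hCS j
    have h4 : ∑ k ∈ Finset.range j, (L * a k + c k)^2 ≤
        2 * L^2 * (∑ k ∈ Finset.range j, (a k)^2) + 2 * ∑ k ∈ Finset.range j, (c k)^2 := by
      rw [Finset.mul_sum, Finset.mul_sum, ← Finset.sum_add_distrib]
      apply Finset.sum_le_sum
      intro k _
      nlinarith [sq_nonneg (L * a k - c k)]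
    have h5 : ∑ k ∈ Finset.range j, (a k)^2 ≤ S := hAle j (le_of_lt hji)
    have h6 : ∑ k ∈ Finset.range j, (c k)^2 ≤ C := hCle j hjn
    have h7 : t^2 ≤ (j:ℝ) * (2 * L^2 * S + 2 * C) := by
      have hjr : (0:ℝ) ≤ j := Nat.cast_nonneg j
      calc t^2 ≤ (j:ℝ) * ∑ k ∈ Finset.range j, (L * a k + c k)^2 := h3
        _ ≤ (j:ℝ) * (2 * L^2 * S + 2 * C) := by
            apply mul_le_mul_of_nonneg_left _ hjr
            calc _ ≤ _ := h4
              _ ≤ 2 * L^2 * S + 2 * C := by nlinarith [sq_nonneg L]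
    have hη2nn : (0:ℝ) ≤ (η/n)^2 := sq_nonneg _
    have h8 : (η/n)^2 * t^2 ≤ (η/n)^2 * ((j:ℝ)*(2*L^2*S+2*C)) :=
      mul_le_mul_of_nonneg_left h7 hη2nn
    have h9 : a j ^2 ≤ 2*a 0^2 + 2*((η/n)^2 * ((j:ℝ)*(2*L^2*S+2*C))) := by
      rw [mul_pow] at h2; linarith
    calc a j ^ 2 ≤ 2*a 0^2 + 2*((η/n)^2 * ((j:ℝ)*(2*L^2*S+2*C))) := h9
      _ = 2 * a 0 ^ 2 + 4 * (η/n)^2 * j * (L^2 * S + C) := by ring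
  -- sum up
  have hgauss : (∑ j ∈ Finset.range i, (j:ℝ)) = (i:ℝ) * ((i:ℝ) - 1) / 2 := by
    have h := Finset.sum_range_id_mul_two i
    have : ((∑ j ∈ Finset.range i, j : ℕ) : ℝ) * 2 = (i:ℝ) * ((i:ℝ) - 1) := by
      rw [← Nat.cast_ofNat, ← Nat.cast_mul, h]
      push_cast [Nat.cast_sub hi1]
      ring
    push_cast at this ⊢
    linarith
  have hSsum : S ≤ 2 * i * a 0 ^ 2 + 4 * (η/n)^2 * ((i:ℝ) * ((i:ℝ)-1)/2) * (L^2 * S + C) := by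
    calc S ≤ ∑ j ∈ Finset.range i, (2 * a 0 ^ 2 + 4 * (η/n)^2 * j * (L^2 * S + C)) := by
          apply Finset.sum_le_sum
          intro j hj
          exact hmaster j (Finset.mem_range.mp hj)
      _ = 2 * i * a 0 ^ 2 + 4 * (η/n)^2 * ((i:ℝ)*((i:ℝ)-1)/2) * (L^2 * S + C) := by
          rw [Finset.sum_add_distrib, Finset.sum_const, Finset.card_range]
          have hpt : ∀ j : ℕ, 4 * (η/n)^2 * (j:ℝ) * (L^2 * S + C)
              = (j:ℝ) * (4 * (η/n)^2 * (L^2 * S + C)) := fun j => by ring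
          rw [Finset.sum_congr rfl (fun j _ => hpt j), ← Finset.sum_mul, hgauss]
          push_cast
          ring
  -- final algebra
  have hIr : (1:ℝ) ≤ i := by exact_mod_cast hi1
  have hIN : (i:ℝ) ≤ n := by exact_mod_cast hin
  have hηL : η * L ≤ 1/2 := by
    rw [le_div_iff₀ (by positivity : (0:ℝ) < 2*L)] at hη2
    linarith
  have hηLnn : 0 ≤ η * L := le_of_lt (mul_pos hη hL)
  -- coefficient bound: 4*(η/n)^2*(I*(I-1)/2) * L^2 ≤ 1/2
  have hcoef1 : 4 * (η/n)^2 * ((i:ℝ)*((i:ℝ)-1)/2) * L^2 * S ≤ (1/2) * S := by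
    apply mul_le_mul_of_nonneg_right _ hSnonneg
    have hII : (i:ℝ)*((i:ℝ)-1) ≤ (n:ℝ)*(n:ℝ) := by nlinarith
    have h1 : (η/n)^2*L^2*((i:ℝ)*((i:ℝ)-1)) ≤ (η/n)^2*L^2*((n:ℝ)*(n:ℝ)) :=
      mul_le_mul_of_nonneg_left hII (by positivity)
    have h2 : (η/n)^2*L^2*((n:ℝ)*(n:ℝ)) = (η*L)^2 := by field_simp
    have h3 : (η*L)^2 ≤ 1/4 := by nlinarith
    calc 4 * (η/n)^2 * ((i:ℝ)*((i:ℝ)-1)/2) * L^2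
        = 2*((η/n)^2*L^2*((i:ℝ)*((i:ℝ)-1))) := by ring
      _ ≤ 2*(η*L)^2 := by rw [← h2]; linarith
      _ ≤ 1/2 := by linarith
  have hcoef2 : 4 * (η/n)^2 * ((i:ℝ)*((i:ℝ)-1)/2) * C ≤ 2 * η^2 * ((i:ℝ)/n) * C := by
    apply mul_le_mul_of_nonneg_right _ hCnonneg
    have hn2 : (0:ℝ) < (n:ℝ)^2 := by positivity
    rw [show 4*(η/n)^2*((i:ℝ)*((i:ℝ)-1)/2) = (2*η^2*((i:ℝ)*((i:ℝ)-1)))/(n:ℝ)^2 from by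
          field_simp; ring,
        show 2*η^2*((i:ℝ)/n) = (2*η^2*((i:ℝ)*(n:ℝ)))/(n:ℝ)^2 from by field_simp]
    gcongr 2*η^2*?_/(n:ℝ)^2
    nlinarith [hIr, hIN]
  have hfin : S ≤ 4 * i * a 0 ^ 2 + 4 * η^2 * ((i:ℝ)/n) * C := by
    nlinarith [hSsum, hcoef1, hcoef2]
  calc S ≤ 4 * i * a 0 ^ 2 + 4 * η^2 * ((i:ℝ)/n) * C := hfin
    _ ≤ 4 * (i:ℝ) * (a 0 ^ 2 + 2 * η^2 * ((1/(n:ℝ)) * C)) := by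
        have : 0 ≤ η^2 * ((i:ℝ)/n) * C := by positivity
        have hexp : 4 * (i:ℝ) * (a 0 ^ 2 + 2 * η^2 * ((1/(n:ℝ)) * C))
            = 4 * i * a 0 ^ 2 + 8 * η^2 * ((i:ℝ)/n) * C := by
          field_simp; ring
        rw [hexp]; linarith
end

section
/- Under the setting of one epoch of the shuffling gradient method ($w_0$ arbitrary, $w_i := w_{i-1} - \frac{\eta}{n}\nabla f(w_{i-1};\pi(i))$ for $i=1,\dots,n$, each $f(\cdot;i)$ $L$-smooth, $w_*$ a stationary point of $F$ with variance $\sigma_*^2$), if $0 < \eta \leq \frac{1}{2L}$, then $\frac{1}{n}\sum_{i=0}^{n-1}\|w_i - w_0\|^2 \leq \frac{8L^2\eta^2}{3}\|w_0 - w_*\|^2 + \frac{16L^2\sigma_*^2}{3}\eta^4 + 2\sigma_*^2\eta^2$. -/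
set_option maxHeartbeats 1000000

theorem stmt9 {E : Type*} [NormedAddCommGroup E] [InnerProductSpace ℝ E] [CompleteSpace E]
    (n : ℕ) (hn : 1 ≤ n) (f : Fin n → E → ℝ) (L : ℝ) (hL : 0 < L)
    (hsmooth : ∀ i : Fin n, ∀ w v : E,
      ‖gradient (f i) w - gradient (f i) v‖ ≤ L * ‖w - v‖)
    (wstar : E) (hstat : ∑ i : Fin n, gradient (f i) wstar = 0)
    (π : Equiv.Perm (Fin n)) (η : ℝ) (hη : 0 < η) (hη2 : η ≤ 1 / (2 * L)) (w : ℕ → E)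
    (hstep : ∀ i : Fin n, w (i.val + 1) = w i.val - (η / n) • gradient (f (π i)) (w i.val)) :
    (1 / (n : ℝ)) * ∑ i ∈ Finset.range n, ‖w i - w 0‖ ^ 2 ≤
      8 * L ^ 2 * η ^ 2 / 3 * ‖w 0 - wstar‖ ^ 2
      + 16 * L ^ 2 * ((1 / (n : ℝ)) * ∑ i : Fin n, ‖gradient (f i) wstar‖ ^ 2) / 3 * η ^ 4
      + 2 * ((1 / (n : ℝ)) * ∑ i : Fin n, ‖gradient (f i) wstar‖ ^ 2) * η ^ 2 := by
  have hN : (0:ℝ) < n := by exact_mod_cast Nat.lt_of_lt_of_le Nat.zero_lt_one hn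
  set D : ℝ := ‖w 0 - wstar‖ with hD
  set Sg : ℝ := ∑ i : Fin n, ‖gradient (f i) wstar‖ ^ 2 with hSgdef
  have hSg0 : 0 ≤ Sg := Finset.sum_nonneg fun i _ => sq_nonneg _
  set G : ℕ → E := fun j => if h : j < n then gradient (f (π ⟨j, h⟩)) (w j) else 0 with hG
  set H : ℕ → E := fun j => if h : j < n then gradient (f (π ⟨j, h⟩)) wstar else 0 with hH
  -- Cauchy-Schwarz on sums over range
  have hCS : ∀ (m : ℕ) (v : ℕ → ℝ),
      (∑ j ∈ Finset.range m, v j) ^ 2 ≤ m * ∑ j ∈ Finset.range m, (v j) ^ 2 := by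
    intro m v
    have := sq_sum_le_card_mul_sum_sq (s := Finset.range m) (f := v)
    simpa using this
  -- sum of ‖H j‖² over range n equals Sg
  have hHsum : ∑ j ∈ Finset.range n, ‖H j‖ ^ 2 = Sg := by
    rw [hSgdef, ← Fin.sum_univ_eq_sum_range (fun j => ‖H j‖ ^ 2) n]
    refine Eq.trans ?_ (Equiv.sum_comp π (fun k => ‖gradient (f k) wstar‖ ^ 2))
    apply Finset.sum_congr rfl
    intro i _
    simp [hH, i.isLt]
  -- telescoping
  have htel : ∀ i : ℕ, i ≤ n → w i - w 0 = -((η / n) • ∑ j ∈ Finset.range i, G j) := by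
    intro i
    induction i with
    | zero => intro _; simp
    | succ k ih =>
      intro hk1
      have hk : k < n := hk1
      have ihk := ih (Nat.le_of_succ_le hk1)
      have hs := hstep ⟨k, hk⟩
      simp only [Fin.val_mk] at hs
      have hGk : G k = gradient (f (π ⟨k, hk⟩)) (w k) := dif_pos hk
      have h1 : w (k+1) - w 0 = (w k - w 0) - (η/n) • G k := by rw [hs, hGk]; abel
      rw [h1, ihk, Finset.sum_range_succ, smul_add]
      abel
  -- key per-iterate bound
  have hkey : ∀ i ∈ Finset.range n, ‖w i - w 0‖ ^ 2 ≤
      (η/n)^2 * ((4/3) * (L^2 * i * ∑ j ∈ Finset.range i, (2*‖w j - w 0‖^2 + 2*D^2))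
        + 4 * (i * Sg)) := by
    intro i hi
    have hi' : i < n := Finset.mem_range.mp hi
    set P : E := ∑ j ∈ Finset.range i, (G j - H j) with hP
    set Q : E := ∑ j ∈ Finset.range i, H j with hQ
    have hsplit : ∑ j ∈ Finset.range i, G j = P + Q := by
      rw [hP, hQ, ← Finset.sum_add_distrib]
      apply Finset.sum_congr rfl; intros; abel
    have hnorm : ‖w i - w 0‖ = (η/n) * ‖P + Q‖ := by
      rw [htel i hi'.le, norm_neg, norm_smul, hsplit, Real.norm_eq_abs,
        abs_of_nonneg (by positivity)]
    have hPb : ‖P‖ ≤ ∑ j ∈ Finset.range i, (L * (‖w j - w 0‖ + D)) := by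
      refine (norm_sum_le _ _).trans (Finset.sum_le_sum ?_)
      intro j hj
      have hjn : j < n := lt_trans (Finset.mem_range.mp hj) hi'
      have hGj : G j = gradient (f (π ⟨j, hjn⟩)) (w j) := dif_pos hjn
      have hHj : H j = gradient (f (π ⟨j, hjn⟩)) wstar := dif_pos hjn
      rw [hGj, hHj]
      refine (hsmooth _ _ _).trans ?_
      apply mul_le_mul_of_nonneg_left _ hL.le
      calc ‖w j - wstar‖ = ‖(w j - w 0) + (w 0 - wstar)‖ := by
            congr 1; abel
        _ ≤ ‖w j - w 0‖ + D := norm_add_le _ _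
    have hP2 : ‖P‖^2 ≤ L^2 * i * ∑ j ∈ Finset.range i, (2*‖w j - w 0‖^2 + 2*D^2) := by
      have h1 : ‖P‖^2 ≤ (∑ j ∈ Finset.range i, (L * (‖w j - w 0‖ + D)))^2 :=
        pow_le_pow_left₀ (norm_nonneg _) hPb 2
      have h2 : (∑ j ∈ Finset.range i, (L * (‖w j - w 0‖ + D)))^2
          = L^2 * (∑ j ∈ Finset.range i, (‖w j - w 0‖ + D))^2 := by
        rw [← Finset.mul_sum]; ring
      have h3 : (∑ j ∈ Finset.range i, (‖w j - w 0‖ + D))^2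
          ≤ i * ∑ j ∈ Finset.range i, (‖w j - w 0‖ + D)^2 := hCS i _
      have h4 : ∑ j ∈ Finset.range i, (‖w j - w 0‖ + D)^2
          ≤ ∑ j ∈ Finset.range i, (2*‖w j - w 0‖^2 + 2*D^2) := by
        apply Finset.sum_le_sum
        intro j _
        nlinarith [sq_nonneg (‖w j - w 0‖ - D)]
      have hi0 : (0:ℝ) ≤ i := Nat.cast_nonneg i
      calc ‖P‖^2 ≤ L^2 * (∑ j ∈ Finset.range i, (‖w j - w 0‖ + D))^2 := by
            rw [← h2]; exact h1
        _ ≤ L^2 * (i * ∑ j ∈ Finset.range i, (2*‖w j - w 0‖^2 + 2*D^2)) := by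
            apply mul_le_mul_of_nonneg_left _ (sq_nonneg L)
            exact h3.trans (mul_le_mul_of_nonneg_left h4 hi0)
        _ = L^2 * i * ∑ j ∈ Finset.range i, (2*‖w j - w 0‖^2 + 2*D^2) := by ring
    have hQ2 : ‖Q‖^2 ≤ i * Sg := by
      have h1 : ‖Q‖^2 ≤ (∑ j ∈ Finset.range i, ‖H j‖)^2 :=
        pow_le_pow_left₀ (norm_nonneg _) (norm_sum_le _ _) 2
      have h2 : (∑ j ∈ Finset.range i, ‖H j‖)^2 ≤ i * ∑ j ∈ Finset.range i, ‖H j‖^2 :=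
        hCS i _
      have h3 : ∑ j ∈ Finset.range i, ‖H j‖^2 ≤ Sg := by
        rw [← hHsum]
        apply Finset.sum_le_sum_of_subset_of_nonneg
        · exact Finset.range_subset_range.mpr hi'.le
        · intro _ _ _; positivity
      have hi0 : (0:ℝ) ≤ i := Nat.cast_nonneg i
      exact h1.trans (h2.trans (mul_le_mul_of_nonneg_left h3 hi0))
    rw [hnorm, mul_pow]
    apply mul_le_mul_of_nonneg_left _ (sq_nonneg (η/n))
    nlinarith [hP2, hQ2, sq_nonneg (‖P‖ - 3*‖Q‖), norm_nonneg P, norm_nonneg Q,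
      norm_add_le P Q, norm_nonneg (P + Q)]
  -- sum up
  obtain ⟨T, hTdef⟩ : ∃ t : ℝ, t = ∑ i ∈ Finset.range n, ‖w i - w 0‖^2 := ⟨_, rfl⟩
  have hT0 : 0 ≤ T := by
    rw [hTdef]; exact Finset.sum_nonneg fun i _ => sq_nonneg _
  have hInner : ∀ i, i < n → ∑ j ∈ Finset.range i, (2*‖w j - w 0‖^2 + 2*D^2)
      ≤ 2*T + 2*n*D^2 := by
    intro i hi
    have h1 : ∑ j ∈ Finset.range i, (2*‖w j - w 0‖^2 + 2*D^2)
        ≤ ∑ j ∈ Finset.range n, (2*‖w j - w 0‖^2 + 2*D^2) := by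
      apply Finset.sum_le_sum_of_subset_of_nonneg (Finset.range_subset_range.mpr hi.le)
      intro _ _ _; positivity
    have h2 : ∑ j ∈ Finset.range n, (2*‖w j - w 0‖^2 + 2*D^2) = 2*T + 2*n*D^2 := by
      rw [Finset.sum_add_distrib, Finset.sum_const, Finset.card_range, hTdef,
        ← Finset.mul_sum]
      push_cast; ring
    linarith
  obtain ⟨C, hCdef⟩ : ∃ c : ℝ, c = (4/3)*L^2*(2*T+2*n*D^2) + 4*Sg := ⟨_, rfl⟩
  have hC0 : 0 ≤ C := by
    have h2 : (0:ℝ) ≤ 2*T + 2*(n:ℝ)*D^2 := by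
      have : (0:ℝ) ≤ (n:ℝ)*D^2 := by positivity
      linarith
    have h3 : (0:ℝ) ≤ (4/3)*L^2 := by positivity
    have h4 := mul_nonneg h3 h2
    rw [hCdef]
    linarith
  have hsummand : ∀ i ∈ Finset.range n, ‖w i - w 0‖^2 ≤ ((η/n)^2 * C) * i := by
    intro i hi
    have hi' : i < n := Finset.mem_range.mp hi
    refine (hkey i hi).trans ?_
    have hIn := hInner i hi'
    have hi0 : (0:ℝ) ≤ i := Nat.cast_nonneg i
    have hmul : (4/3) * (L^2 * i * ∑ j ∈ Finset.range i, (2*‖w j - w 0‖^2 + 2*D^2))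
        ≤ (4/3) * (L^2 * i * (2*T+2*n*D^2)) := by
      apply mul_le_mul_of_nonneg_left _ (by norm_num)
      exact mul_le_mul_of_nonneg_left hIn (by positivity)
    have heqC : (4/3) * (L^2 * i * (2*T+2*n*D^2)) + 4*(i*Sg) = C * i := by
      rw [hCdef]; ring
    have hlin : (4/3) * (L^2 * i * ∑ j ∈ Finset.range i, (2*‖w j - w 0‖^2 + 2*D^2))
        + 4*(i*Sg) ≤ C * i := by rw [← heqC]; linarith
    calc (η/n)^2 * ((4/3) * (L^2 * i * ∑ j ∈ Finset.range i, (2*‖w j - w 0‖^2 + 2*D^2))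
          + 4*(i*Sg)) ≤ (η/n)^2 * (C * i) :=
            mul_le_mul_of_nonneg_left hlin (sq_nonneg _)
      _ = ((η/n)^2 * C) * i := by ring
  have hgauss : (∑ i ∈ Finset.range n, (i:ℝ)) ≤ (n:ℝ)^2/2 := by
    have h := Finset.sum_range_id_mul_two n
    have h2 : ((∑ i ∈ Finset.range n, i : ℕ) : ℝ) * 2 = (n:ℝ) * ((n:ℝ) - 1) := by
      rw [← Nat.cast_ofNat, ← Nat.cast_mul, h]
      push_cast [Nat.cast_sub hn]
      ring
    push_cast at h2
    nlinarith [hN]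
  have hTbound : T ≤ (4/3)*L^2*η^2*(T + n*D^2) + 2*η^2*Sg := by
    have h1 : T ≤ ∑ i ∈ Finset.range n, ((η/n)^2 * C) * i := by
      rw [hTdef]; exact Finset.sum_le_sum hsummand
    have h2 : ∑ i ∈ Finset.range n, ((η/n)^2 * C) * (i:ℝ)
        = ((η/n)^2 * C) * ∑ i ∈ Finset.range n, (i:ℝ) := by
      rw [Finset.mul_sum]
    have h3 : ((η/n)^2 * C) * ∑ i ∈ Finset.range n, (i:ℝ)
        ≤ ((η/n)^2 * C) * ((n:ℝ)^2/2) :=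
      mul_le_mul_of_nonneg_left hgauss (by positivity)
    have h4 : ((η/n)^2 * C) * ((n:ℝ)^2/2) = (4/3)*L^2*η^2*(T + n*D^2) + 2*η^2*Sg := by
      rw [hCdef]
      field_simp
      ring
    rw [h2] at h1
    linarith [h1, h3, h4.le, h4.ge]
  -- final algebra
  have hc : L^2*η^2 ≤ 1/4 := by
    have h2L : (0:ℝ) < 2*L := by linarith
    have hx : η * (2*L) ≤ 1 := by
      have := (le_div_iff₀ h2L).mp hη2
      linarith
    nlinarith [hx, sq_nonneg (η*(2*L) - 1), mul_pos hη hL]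
  have hc0 : 0 ≤ L^2*η^2 := by positivity
  have hnD2 : 0 ≤ (n:ℝ)*D^2 := by positivity
  have hfinal : T ≤ 8*L^2*η^2/3*D^2*n + 16*L^2*η^4*Sg/3 + 2*η^2*Sg := by
    nlinarith [hTbound, hc, hc0, hT0, hnD2, hSg0, sq_nonneg η,
      mul_nonneg (mul_nonneg hc0 hSg0) (sq_nonneg η),
      mul_nonneg hc0 hnD2,
      mul_nonneg (mul_nonneg hc0 hc0) hnD2,
      mul_nonneg (mul_nonneg (mul_nonneg hc0 hc0) hSg0) (sq_nonneg η)]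
  have heq : (1/(n:ℝ)) * (8*L^2*η^2/3*D^2*n + 16*L^2*η^4*Sg/3 + 2*η^2*Sg)
      = 8 * L ^ 2 * η ^ 2 / 3 * D ^ 2
      + 16 * L ^ 2 * ((1 / (n : ℝ)) * Sg) / 3 * η ^ 4
      + 2 * ((1 / (n : ℝ)) * Sg) * η ^ 2 := by
    field_simp
  rw [← hTdef]
  calc (1 / (n : ℝ)) * T ≤ (1/(n:ℝ)) * (8*L^2*η^2/3*D^2*n + 16*L^2*η^4*Sg/3 + 2*η^2*Sg) :=
        mul_le_mul_of_nonneg_left hfinal (by positivity)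
    _ = _ := heq
end

section
/- Suppose each $f(\cdot;i)$ is $L$-smooth and the variance condition $\frac{1}{n}\sum_{i=1}^n\|\nabla f(w;i) - \nabla F(w)\|^2 \leq \Theta\|\nabla F(w)\|^2 + \sigma^2$ holds for all $w$, where $F = \frac{1}{n}\sum_i f(\cdot;i)$. Let $\pi$ be any permutation of $[n]$, $0 < \eta \leq \frac{1}{L\sqrt{3}}$, and define $w_0$ arbitrary, $w_i := w_{i-1} - \frac{\eta}{n}\nabla f(w_{i-1};\pi(i))$ for $i = 1,\dots,n$. Then $\sum_{j=0}^{n-1}\|w_j - w_0\|^2 \leq n\eta^2\big[(3\Theta + 2)\|\nabla F(w_0)\|^2 + 3\sigma^2\big]$. -/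
open Finset

private lemma norm_sq_add3 {E : Type*} [NormedAddCommGroup E] (x y z : E) :
    ‖x + y + z‖ ^ 2 ≤ 3 * (‖x‖ ^ 2 + ‖y‖ ^ 2 + ‖z‖ ^ 2) := by
  have h : ‖x + y + z‖ ≤ ‖x‖ + ‖y‖ + ‖z‖ := norm_add₃_le
  have h2 : ‖x + y + z‖ ^ 2 ≤ (‖x‖ + ‖y‖ + ‖z‖) ^ 2 :=
    pow_le_pow_left₀ (norm_nonneg _) h 2
  nlinarith [sq_nonneg (‖x‖ - ‖y‖), sq_nonneg (‖x‖ - ‖z‖), sq_nonneg (‖y‖ - ‖z‖)]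

private lemma sum_id_le (n : ℕ) : ∑ j ∈ range n, (j : ℝ) ≤ (n : ℝ) ^ 2 / 2 := by
  induction n with
  | zero => simp
  | succ m ih =>
    rw [Finset.sum_range_succ]
    push_cast
    nlinarith

private lemma alg1 (η nn L S SB G : ℝ) (h : nn ≠ 0) :
    (η / nn) ^ 2 * ((nn ^ 2 / 2) * (3 * L ^ 2 * S + 3 * SB) + 3 * G * (nn ^ 3 / 3))
      = (3/2) * η^2 * L^2 * S + (3/2) * η^2 * SB + η^2 * nn * G := by
  field_simp

private lemma etaL_bound (η L : ℝ) (hη : 0 < η) (hL : 0 < L)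
    (hη2 : η ≤ 1 / (L * Real.sqrt 3)) : η ^ 2 * L ^ 2 ≤ 1 / 3 := by
  have hs3 : Real.sqrt 3 > 0 := Real.sqrt_pos.mpr (by norm_num)
  have hLs : 0 < L * Real.sqrt 3 := mul_pos hL hs3
  have h1 : η * (L * Real.sqrt 3) ≤ 1 := by
    calc η * (L * Real.sqrt 3) ≤ (1 / (L * Real.sqrt 3)) * (L * Real.sqrt 3) :=
          mul_le_mul_of_nonneg_right hη2 hLs.le
      _ = 1 := one_div_mul_cancel (ne_of_gt hLs)
  have h2 : (Real.sqrt 3) ^ 2 = 3 := Real.sq_sqrt (by norm_num)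
  nlinarith [mul_pos hη hLs, sq_nonneg (η * L), h1, h2]

private lemma sum_sq_le (n : ℕ) : ∑ j ∈ range n, (j : ℝ) ^ 2 ≤ (n : ℝ) ^ 3 / 3 := by
  induction n with
  | zero => simp
  | succ m ih =>
    rw [Finset.sum_range_succ]
    push_cast
    nlinarith [Nat.cast_nonneg (α := ℝ) m]

set_option maxHeartbeats 1600000

theorem stmt10 {E : Type*} [NormedAddCommGroup E] [InnerProductSpace ℝ E] [CompleteSpace E]
    (n : ℕ) (hn : 1 ≤ n) (f : Fin n → E → ℝ) (F : E → ℝ) (L Θ σ : ℝ)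
    (hL : 0 < L) (hΘ : 0 ≤ Θ) (hσ : 0 < σ)
    (hF : ∀ x : E, F x = (1 / (n : ℝ)) * ∑ i : Fin n, f i x)
    (hsmooth : ∀ i : Fin n, ∀ w v : E,
      ‖gradient (f i) w - gradient (f i) v‖ ≤ L * ‖w - v‖)
    (hvar : ∀ x : E, (1 / (n : ℝ)) * ∑ i : Fin n, ‖gradient (f i) x - gradient F x‖ ^ 2 ≤
      Θ * ‖gradient F x‖ ^ 2 + σ ^ 2)
    (π : Equiv.Perm (Fin n)) (η : ℝ) (hη : 0 < η) (hη2 : η ≤ 1 / (L * Real.sqrt 3))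
    (w : ℕ → E)
    (hstep : ∀ i : Fin n, w (i.val + 1) = w i.val - (η / n) • gradient (f (π i)) (w i.val)) :
    ∑ j ∈ Finset.range n, ‖w j - w 0‖ ^ 2 ≤
      (n : ℝ) * η ^ 2 * ((3 * Θ + 2) * ‖gradient F (w 0)‖ ^ 2 + 3 * σ ^ 2) := by
  have hn0 : (0 : ℝ) < n := by exact_mod_cast hn
  set g : E := gradient F (w 0) with hg
  set G : ℝ := ‖g‖ ^ 2 with hG
  have hG0 : 0 ≤ G := sq_nonneg _
  -- stochastic gradients along the trajectory and at w 0
  set v : ℕ → E := fun k => if h : k < n then gradient (f (π ⟨k, h⟩)) (w k) else 0 with hv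
  set b : ℕ → E := fun k => if h : k < n then gradient (f (π ⟨k, h⟩)) (w 0) else 0 with hb
  clear_value g v b
  -- unrolled recursion
  have key : ∀ j, j ≤ n → w j = w 0 - (η / n) • ∑ k ∈ range j, v k := by
    intro j hj
    induction j with
    | zero => simp
    | succ j ih =>
      have hjn : j < n := hj
      have hvj : v j = gradient (f (π ⟨j, hjn⟩)) (w j) := by simp [hv, hjn]
      have hstepj : w (j + 1) = w j - (η / n) • v j := by
        rw [hvj]; exact hstep ⟨j, hjn⟩
      rw [Finset.sum_range_succ, hstepj, ih (le_of_lt hjn), smul_add]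
      abel
  -- per-step bound on ‖v k‖²
  have hvk : ∀ k, k < n →
      ‖v k‖ ^ 2 ≤ 3 * (L ^ 2 * ‖w k - w 0‖ ^ 2 + ‖b k - g‖ ^ 2 + G) := by
    intro k hk
    have hvk' : v k = gradient (f (π ⟨k, hk⟩)) (w k) := by simp [hv, hk]
    have hbk : b k = gradient (f (π ⟨k, hk⟩)) (w 0) := by simp [hb, hk]
    have hdecomp : v k = (v k - b k) + (b k - g) + g := by abel
    have h1 : ‖v k‖ ^ 2 ≤ 3 * (‖v k - b k‖ ^ 2 + ‖b k - g‖ ^ 2 + ‖g‖ ^ 2) := by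
      calc ‖v k‖ ^ 2 = ‖(v k - b k) + (b k - g) + g‖ ^ 2 := by rw [← hdecomp]
        _ ≤ _ := norm_sq_add3 _ _ _
    have h2 : ‖v k - b k‖ ≤ L * ‖w k - w 0‖ := by
      rw [hvk', hbk]; exact hsmooth (π ⟨k, hk⟩) (w k) (w 0)
    have h3 : ‖v k - b k‖ ^ 2 ≤ L ^ 2 * ‖w k - w 0‖ ^ 2 := by
      have := mul_self_le_mul_self (norm_nonneg _) h2
      nlinarith [norm_nonneg (v k - b k)]
    nlinarith [sq_nonneg ‖b k - g‖]
  -- bound on each ‖w j - w 0‖²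
  have hAj : ∀ j, j ≤ n →
      ‖w j - w 0‖ ^ 2 ≤ (η / n) ^ 2 * ((j : ℝ) * ∑ k ∈ range j, ‖v k‖ ^ 2) := by
    intro j hj
    rw [key j hj]
    have : w 0 - (η / n) • ∑ k ∈ range j, v k - w 0 = -((η / n) • ∑ k ∈ range j, v k) := by
      abel
    rw [this, norm_neg, norm_smul, mul_pow]
    have hCS : ‖∑ k ∈ range j, v k‖ ^ 2 ≤ (j : ℝ) * ∑ k ∈ range j, ‖v k‖ ^ 2 := by
      have h1 : ‖∑ k ∈ range j, v k‖ ≤ ∑ k ∈ range j, ‖v k‖ := norm_sum_le _ _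
      have h2 : (∑ k ∈ range j, ‖v k‖) ^ 2 ≤ (#(range j) : ℝ) * ∑ k ∈ range j, ‖v k‖ ^ 2 :=
        sq_sum_le_card_mul_sum_sq
      rw [Finset.card_range] at h2
      calc ‖∑ k ∈ range j, v k‖ ^ 2 ≤ (∑ k ∈ range j, ‖v k‖) ^ 2 := by
            apply pow_le_pow_left₀ (norm_nonneg _) h1
        _ ≤ _ := h2
    have hnn : (0:ℝ) ≤ ‖(η / n : ℝ)‖ ^ 2 := sq_nonneg _
    calc ‖(η / n : ℝ)‖ ^ 2 * ‖∑ k ∈ range j, v k‖ ^ 2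
        ≤ ‖(η / n : ℝ)‖ ^ 2 * ((j : ℝ) * ∑ k ∈ range j, ‖v k‖ ^ 2) :=
          mul_le_mul_of_nonneg_left hCS hnn
      _ = (η / n) ^ 2 * ((j : ℝ) * ∑ k ∈ range j, ‖v k‖ ^ 2) := by
          rw [Real.norm_eq_abs, sq_abs]
  set S : ℝ := ∑ j ∈ range n, ‖w j - w 0‖ ^ 2 with hS
  have hS0 : 0 ≤ S := Finset.sum_nonneg fun j _ => sq_nonneg _
  set SB : ℝ := ∑ k ∈ range n, ‖b k - g‖ ^ 2 with hSB
  clear_value S SB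
  have hSB0 : 0 ≤ SB := by rw [hSB]; exact Finset.sum_nonneg fun j _ => sq_nonneg _
  -- variance bound: SB ≤ n * (Θ * G + σ²)
  have hSBle : SB ≤ (n : ℝ) * (Θ * G + σ ^ 2) := by
    have h1 : SB = ∑ i : Fin n, ‖gradient (f (π i)) (w 0) - g‖ ^ 2 := by
      rw [hSB]
      rw [← Fin.sum_univ_eq_sum_range (fun k => ‖b k - g‖ ^ 2) n]
      apply Finset.sum_congr rfl
      intro i _
      have : b i.val = gradient (f (π i)) (w 0) := by simp [hb, i.isLt]
      rw [this]
    have h2 : ∑ i : Fin n, ‖gradient (f (π i)) (w 0) - g‖ ^ 2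
        = ∑ i : Fin n, ‖gradient (f i) (w 0) - g‖ ^ 2 :=
      Equiv.sum_comp π (fun i => ‖gradient (f i) (w 0) - g‖ ^ 2)
    have h3 := hvar (w 0)
    rw [← hg, ← hG] at h3
    rw [h1, h2]
    have := mul_le_mul_of_nonneg_left h3 (le_of_lt hn0)
    rw [← mul_assoc, mul_one_div, div_self (ne_of_gt hn0), one_mul] at this
    exact this
  -- bound the inner sums for j ≤ n
  have hTj : ∀ j, j ≤ n →
      ∑ k ∈ range j, ‖v k‖ ^ 2 ≤ 3 * L ^ 2 * S + 3 * SB + 3 * (j : ℝ) * G := by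
    intro j hj
    have step1 : ∑ k ∈ range j, ‖v k‖ ^ 2
        ≤ ∑ k ∈ range j, (3 * (L ^ 2 * ‖w k - w 0‖ ^ 2 + ‖b k - g‖ ^ 2 + G)) := by
      apply Finset.sum_le_sum
      intro k hk
      exact hvk k (lt_of_lt_of_le (Finset.mem_range.mp hk) hj)
    have step2 : ∑ k ∈ range j, (3 * (L ^ 2 * ‖w k - w 0‖ ^ 2 + ‖b k - g‖ ^ 2 + G))
        = 3 * L ^ 2 * (∑ k ∈ range j, ‖w k - w 0‖ ^ 2)
          + 3 * (∑ k ∈ range j, ‖b k - g‖ ^ 2) + 3 * (j : ℝ) * G := by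
      calc ∑ k ∈ range j, (3 * (L ^ 2 * ‖w k - w 0‖ ^ 2 + ‖b k - g‖ ^ 2 + G))
          = (∑ k ∈ range j, (3 * L ^ 2 * ‖w k - w 0‖ ^ 2 + 3 * ‖b k - g‖ ^ 2))
            + ∑ _k ∈ range j, 3 * G := by
            rw [← Finset.sum_add_distrib]
            exact Finset.sum_congr rfl fun k _ => by ring
        _ = (∑ k ∈ range j, 3 * L ^ 2 * ‖w k - w 0‖ ^ 2)
            + (∑ k ∈ range j, 3 * ‖b k - g‖ ^ 2) + ∑ _k ∈ range j, 3 * G := by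
            rw [Finset.sum_add_distrib]
        _ = _ := by
            rw [← Finset.mul_sum, ← Finset.mul_sum, Finset.sum_const, Finset.card_range,
              nsmul_eq_mul]
            ring
    have hsub : range j ⊆ range n := Finset.range_subset_range.mpr hj
    have m1 : ∑ k ∈ range j, ‖w k - w 0‖ ^ 2 ≤ S := by
      rw [hS]; exact Finset.sum_le_sum_of_subset_of_nonneg hsub (fun k _ _ => sq_nonneg _)
    have m2 : ∑ k ∈ range j, ‖b k - g‖ ^ 2 ≤ SB := by
      rw [hSB]; exact Finset.sum_le_sum_of_subset_of_nonneg hsub (fun k _ _ => sq_nonneg _)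
    have hL2 : (0:ℝ) ≤ 3 * L ^ 2 := by positivity
    nlinarith
  -- sum everything
  have hmain : S ≤ (η / n) ^ 2 *
      ((∑ j ∈ range n, (j : ℝ)) * (3 * L ^ 2 * S + 3 * SB) + 3 * G * ∑ j ∈ range n, (j:ℝ) ^ 2) := by
    have hterm : ∀ j ∈ range n, ‖w j - w 0‖ ^ 2 ≤
        (η / n) ^ 2 * ((j : ℝ) * (3 * L ^ 2 * S + 3 * SB) + 3 * G * (j : ℝ) ^ 2) := by
      intro j hj
      have hjn : j ≤ n := le_of_lt (Finset.mem_range.mp hj)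
      have h1 := hAj j hjn
      have h2 := hTj j hjn
      have hj0 : (0:ℝ) ≤ (j : ℝ) := Nat.cast_nonneg j
      have h3 : (j : ℝ) * ∑ k ∈ range j, ‖v k‖ ^ 2
          ≤ (j : ℝ) * (3 * L ^ 2 * S + 3 * SB + 3 * (j:ℝ) * G) :=
        mul_le_mul_of_nonneg_left h2 hj0
      have hη0 : (0:ℝ) ≤ (η / n) ^ 2 := sq_nonneg _
      calc ‖w j - w 0‖ ^ 2 ≤ (η / n) ^ 2 * ((j : ℝ) * ∑ k ∈ range j, ‖v k‖ ^ 2) := h1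
        _ ≤ (η / n) ^ 2 * ((j : ℝ) * (3 * L ^ 2 * S + 3 * SB + 3 * (j:ℝ) * G)) :=
            mul_le_mul_of_nonneg_left h3 hη0
        _ = (η / n) ^ 2 * ((j : ℝ) * (3 * L ^ 2 * S + 3 * SB) + 3 * G * (j : ℝ) ^ 2) := by ring
    have hstep1 : S ≤ ∑ j ∈ range n,
        (η / n) ^ 2 * ((j : ℝ) * (3 * L ^ 2 * S + 3 * SB) + 3 * G * (j : ℝ) ^ 2) := by
      conv_lhs => rw [hS]
      exact Finset.sum_le_sum hterm
    have hstep2 : ∑ j ∈ range n,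
        (η / n) ^ 2 * ((j : ℝ) * (3 * L ^ 2 * S + 3 * SB) + 3 * G * (j : ℝ) ^ 2)
        = (η / n) ^ 2 * ((∑ j ∈ range n, (j : ℝ)) * (3 * L ^ 2 * S + 3 * SB)
            + 3 * G * ∑ j ∈ range n, (j:ℝ) ^ 2) := by
      rw [← Finset.mul_sum]
      congr 1
      rw [Finset.sum_add_distrib, ← Finset.sum_mul, ← Finset.mul_sum]
    exact hstep1.trans_eq hstep2
  -- numeric bounds
  have hsum1 := sum_id_le n
  have hsum2 := sum_sq_le n
  have hpos : (0:ℝ) ≤ 3 * L ^ 2 * S + 3 * SB := by positivity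
  have hmain2 : S ≤ (η / n) ^ 2 *
      (((n:ℝ)^2/2) * (3 * L ^ 2 * S + 3 * SB) + 3 * G * ((n:ℝ)^3/3)) := by
    refine le_trans hmain (mul_le_mul_of_nonneg_left ?_ (sq_nonneg _))
    have := mul_le_mul_of_nonneg_right hsum1 hpos
    have := mul_le_mul_of_nonneg_left hsum2 (by positivity : (0:ℝ) ≤ 3 * G)
    linarith
  have hsimp : (η / n) ^ 2 * (((n:ℝ)^2/2) * (3 * L ^ 2 * S + 3 * SB) + 3 * G * ((n:ℝ)^3/3))
      = (3/2) * η^2 * L^2 * S + (3/2) * η^2 * SB + η^2 * (n:ℝ) * G :=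
    alg1 η (n:ℝ) L S SB G (ne_of_gt hn0)
  rw [hsimp] at hmain2
  -- η² L² ≤ 1/3
  have hηL : η ^ 2 * L ^ 2 ≤ 1 / 3 := etaL_bound η L hη hL hη2
  have hfin : (3/2) * η^2 * L^2 * S ≤ S / 2 := by
    have hh := mul_le_mul_of_nonneg_right hηL hS0
    linarith
  have hSBmul : (3/2) * η^2 * SB ≤ (3/2) * η^2 * ((n : ℝ) * (Θ * G + σ ^ 2)) :=
    mul_le_mul_of_nonneg_left hSBle (by positivity)
  have hGmul : (0:ℝ) ≤ η^2 * (n:ℝ) * G := by positivity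
  have htarget : (n : ℝ) * η ^ 2 * ((3 * Θ + 2) * G + 3 * σ ^ 2)
      = 3 * ((3/2) * η^2 * ((n : ℝ) * (Θ * G + σ ^ 2))) / (3/2) * 1
        + 2 * (η^2 * (n:ℝ) * G) := by ring
  have : S ≤ (n : ℝ) * η ^ 2 * ((3 * Θ + 2) * G + 3 * σ ^ 2) := by
    rw [htarget]
    have e1 : 3 * ((3/2) * η^2 * ((n : ℝ) * (Θ * G + σ ^ 2))) / (3/2) * 1
        = 2 * ((3/2) * η^2 * ((n : ℝ) * (Θ * G + σ ^ 2))) := by ring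
    rw [e1]
    linarith
  exact this
end

section
/- Let $F$ be $\mu$-strongly convex and the sequence $\{\tilde w_t\}$ satisfy the recursion $F(\tilde w_t) - F(w_*) \leq (1 - \frac{\mu}{3}\eta_t)(F(\tilde w_{t-1}) - F(w_*)) + (\mu^2 + L^2)\sigma_*^2\eta_t^3$ for all $t \geq 1$, where $\eta_t := \frac{6}{\mu(t+\beta)}$ with $\beta \geq 12(L/\mu)^2 - 1$ and $\beta \geq 1$. Then for all $t \geq 1$: $F(\tilde w_t) - F(w_*) \leq \frac{\beta(\beta-1)}{(t+\beta)(t+\beta-1)}\Big[(F(\tilde w_0) - F(w_*)) + \frac{216(L^2+\mu^2)\sigma_*^2\log(t+\beta)}{\mu^3\beta(\beta-1)}\Big]$. -/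
/-!
With `η_t = 6 / (μ (t + β))` the contraction factor is `1 - 2 / (t + β)`, and multiplying the
recursion by `w_t = (t + β)(t + β - 1)` telescopes it: since `w_t (1 - 2 / (t + β)) = w_{t-1}`,
the potential `w_t Y_t - C log (t + β)` is nonincreasing, the noise term `C w_t / (t + β)^3`
being dominated by `C (log (t + β) - log (t + β - 1))`.
-/

open Real

lemma inv_add_one_le_log_add_one_sub_log {s : ℝ} (hs : 0 < s) :
    1 / (s + 1) ≤ log (s + 1) - log s := by
  have h := one_sub_inv_le_log_of_pos (x := (s + 1) / s) (by positivity)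
  rw [log_div (by positivity) hs.ne', inv_div] at h
  calc 1 / (s + 1) = 1 - s / (s + 1) := by field_simp; ring
    _ ≤ _ := h

lemma potential_step_le {s y y' C : ℝ} (hs : 0 < s) (hC : 0 ≤ C)
    (hy : y' ≤ (1 - 2 / (s + 1)) * y + C / (s + 1) ^ 3) :
    (s + 1) * s * y' - C * log (s + 1) ≤ s * (s - 1) * y - C * log s := by
  have hw : 0 < (s + 1) * s := by positivity
  have hcontract : (s + 1) * s * (1 - 2 / (s + 1)) = s * (s - 1) := by field_simp; ring
  have hnoise : (s + 1) * s * (C / (s + 1) ^ 3) ≤ C * (log (s + 1) - log s) := by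
    calc (s + 1) * s * (C / (s + 1) ^ 3) = C * (1 / (s + 1)) * (s / (s + 1)) := by
          field_simp
      _ ≤ C * (1 / (s + 1)) * 1 := by
          gcongr
          exact (div_le_one (by positivity)).mpr (by linarith)
      _ ≤ C * (log (s + 1) - log s) := by
          rw [mul_one]
          exact mul_le_mul_of_nonneg_left (inv_add_one_le_log_add_one_sub_log hs) hC
  have hstep : (s + 1) * s * y' ≤ s * (s - 1) * y + (s + 1) * s * (C / (s + 1) ^ 3) := by
    calc (s + 1) * s * y' ≤ (s + 1) * s * ((1 - 2 / (s + 1)) * y + C / (s + 1) ^ 3) :=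
          mul_le_mul_of_nonneg_left hy hw.le
      _ = _ := by rw [mul_add, ← mul_assoc, hcontract]
  linarith

lemma le_of_le_one_sub_two_div_mul_add {Y : ℕ → ℝ} {β C : ℝ} (hβ : 1 < β) (hC : 0 ≤ C)
    (hrec : ∀ t : ℕ, Y (t + 1) ≤ (1 - 2 / (((t + 1 : ℕ) : ℝ) + β)) * Y t
      + C / (((t + 1 : ℕ) : ℝ) + β) ^ 3) (t : ℕ) :
    Y t ≤ β * (β - 1) / (((t : ℝ) + β) * ((t : ℝ) + β - 1)) *
      (Y 0 + C * log ((t : ℝ) + β) / (β * (β - 1))) := by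
  set Φ : ℕ → ℝ := fun t => ((t : ℝ) + β) * ((t : ℝ) + β - 1) * Y t - C * log ((t : ℝ) + β)
  have hΦ : Antitone Φ := antitone_nat_of_succ_le fun n => by
    have hy := hrec n
    rw [Nat.cast_succ, add_right_comm] at hy
    have h := potential_step_le (by positivity) hC hy
    simp only [Φ, Nat.cast_succ]
    rw [add_right_comm, add_sub_cancel_right]
    exact h
  have hΦt : Φ t ≤ Φ 0 := hΦ (Nat.zero_le t)
  have hlogβ : 0 ≤ C * log β := mul_nonneg hC (log_nonneg hβ.le)
  have hw : 0 < ((t : ℝ) + β) * ((t : ℝ) + β - 1) := by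
    have : (0 : ℝ) ≤ t := t.cast_nonneg
    nlinarith
  have hβw : β * (β - 1) ≠ 0 := by nlinarith
  simp only [Φ, Nat.cast_zero, zero_add] at hΦt
  rw [div_mul_eq_mul_div, le_div_iff₀ hw, mul_add, mul_div_cancel₀ _ hβw]
  linarith

theorem stmt15_general {E : Type*}
    (F : E → ℝ) (μ L σstar β : ℝ) (wstar : E) (tw : ℕ → E) (η : ℕ → ℝ)
    (hμ : 0 < μ) (hμL : μ ≤ L)
    (hβ2 : 12 * (L / μ) ^ 2 - 1 ≤ β)
    (hη : ∀ t : ℕ, η t = 6 / (μ * ((t : ℝ) + β)))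
    (hrec : ∀ t : ℕ, 1 ≤ t →
      F (tw t) - F wstar ≤ (1 - μ / 3 * η t) * (F (tw (t - 1)) - F wstar)
        + (μ ^ 2 + L ^ 2) * σstar ^ 2 * η t ^ 3) :
    ∀ t : ℕ, 1 ≤ t →
      F (tw t) - F wstar ≤ β * (β - 1) / (((t : ℝ) + β) * ((t : ℝ) + β - 1)) *
        ((F (tw 0) - F wstar)
          + 216 * (L ^ 2 + μ ^ 2) * σstar ^ 2 * Real.log ((t : ℝ) + β) /
            (μ ^ 3 * β * (β - 1))) := by
  intro t _
  have hβ : 1 < β := by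
    have : 1 ≤ L / μ := (one_le_div hμ).mpr hμL
    nlinarith
  have hC : 0 ≤ 216 * (μ ^ 2 + L ^ 2) * σstar ^ 2 / μ ^ 3 := by positivity
  have hrec' : ∀ n : ℕ, F (tw (n + 1)) - F wstar ≤
      (1 - 2 / (((n + 1 : ℕ) : ℝ) + β)) * (F (tw n) - F wstar)
        + 216 * (μ ^ 2 + L ^ 2) * σstar ^ 2 / μ ^ 3 / (((n + 1 : ℕ) : ℝ) + β) ^ 3 := by
    intro n
    have hs : 0 < ((n + 1 : ℕ) : ℝ) + β := by positivity
    have hfactor : 1 - μ / 3 * η (n + 1) = 1 - 2 / (((n + 1 : ℕ) : ℝ) + β) := by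
      rw [hη]; field_simp; ring
    have hnoise : (μ ^ 2 + L ^ 2) * σstar ^ 2 * η (n + 1) ^ 3
        = 216 * (μ ^ 2 + L ^ 2) * σstar ^ 2 / μ ^ 3 / (((n + 1 : ℕ) : ℝ) + β) ^ 3 := by
      rw [hη]; field_simp; ring
    simpa only [Nat.add_sub_cancel, hfactor, hnoise] using hrec (n + 1) n.succ_pos
  convert le_of_le_one_sub_two_div_mul_add (Y := fun n => F (tw n) - F wstar) hβ hC hrec' t
    using 3
  rw [mul_assoc (μ ^ 3), ← div_div]
  ring

theorem stmt15 {E : Type*} [NormedAddCommGroup E] [InnerProductSpace ℝ E] [CompleteSpace E]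
    (F : E → ℝ) (μ L σstar β : ℝ) (wstar : E) (tw : ℕ → E) (η : ℕ → ℝ)
    (hμ : 0 < μ) (hμL : μ ≤ L) (hσ : 0 ≤ σstar)
    (hsc : ∀ w v : E,
      F v + (inner ℝ (gradient F v) (w - v) : ℝ) + μ / 2 * ‖w - v‖ ^ 2 ≤ F w)
    (hβ1 : 1 ≤ β) (hβ2 : 12 * (L / μ) ^ 2 - 1 ≤ β)
    (hnn : ∀ t : ℕ, 0 ≤ F (tw t) - F wstar)
    (hη : ∀ t : ℕ, η t = 6 / (μ * ((t : ℝ) + β)))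
    (hrec : ∀ t : ℕ, 1 ≤ t →
      F (tw t) - F wstar ≤ (1 - μ / 3 * η t) * (F (tw (t - 1)) - F wstar)
        + (μ ^ 2 + L ^ 2) * σstar ^ 2 * η t ^ 3) :
    ∀ t : ℕ, 1 ≤ t →
      F (tw t) - F wstar ≤ β * (β - 1) / (((t : ℝ) + β) * ((t : ℝ) + β - 1)) *
        ((F (tw 0) - F wstar)
          + 216 * (L ^ 2 + μ ^ 2) * σstar ^ 2 * Real.log ((t : ℝ) + β) /
            (μ ^ 3 * β * (β - 1))) :=
  stmt15_general F μ L σstar β wstar tw η hμ hμL hβ2 hη hrec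
end

section
/- Let $\{Y_t\}_{t\geq 1}$, $\{Z_t\}_{t\geq 1}$ be nonnegative real sequences with $Y_{t+1} \leq Y_t - \frac{\eta_t}{2}Z_t + \frac{L\sigma^2}{2}\eta_t^2$, where $\eta_t := \frac{\gamma}{(t+\beta)^{1/2}}$ for $\gamma, \beta, L, \sigma > 0$. Then for every $k \geq 1$: $Y_{k+1} \leq Y_1 + \frac{L\sigma^2\gamma^2}{2(1+\beta)} + \frac{L\sigma^2\gamma^2}{2}\log(k+2+\beta)$, and consequently for all $T \geq 1$: $\frac{1}{T}\sum_{t=1}^T Z_t \leq \frac{2(1+\beta)^{1/2}Y_1}{\gamma T} + \frac{2C(T-1+\beta)^{1/2}}{\gamma T} + L\gamma\sigma^2\frac{(T-1+\beta)^{1/2}\log(T+1+\beta)}{T} + 2L\gamma\sigma^2\frac{(T+\beta)^{1/2}}{T}$, where $C := Y_1 + \frac{L\sigma^2\gamma^2}{2(1+\beta)}$. -/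
set_option maxHeartbeats 1000000


theorem stmt18 (Y Z : ℕ → ℝ) (L σ γ β : ℝ) (η : ℕ → ℝ)
    (hL : 0 < L) (hσ : 0 < σ) (hγ : 0 < γ) (hβ : 0 < β)
    (hY : ∀ t : ℕ, 1 ≤ t → 0 ≤ Y t) (hZ : ∀ t : ℕ, 1 ≤ t → 0 ≤ Z t)
    (hη : ∀ t : ℕ, η t = γ / ((t : ℝ) + β) ^ ((1 : ℝ) / 2))
    (hrec : ∀ t : ℕ, 1 ≤ t → Y (t + 1) ≤ Y t - η t / 2 * Z t + L * σ ^ 2 / 2 * η t ^ 2) :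
    (∀ k : ℕ, 1 ≤ k →
      Y (k + 1) ≤ Y 1 + L * σ ^ 2 * γ ^ 2 / (2 * (1 + β))
        + L * σ ^ 2 * γ ^ 2 / 2 * Real.log ((k : ℝ) + 2 + β)) ∧
    (∀ T : ℕ, 1 ≤ T →
      (1 / (T : ℝ)) * ∑ t ∈ Finset.Icc 1 T, Z t ≤
        2 * (1 + β) ^ ((1 : ℝ) / 2) * Y 1 / (γ * (T : ℝ))
        + 2 * (Y 1 + L * σ ^ 2 * γ ^ 2 / (2 * (1 + β))) *
          (((T : ℝ) - 1 + β) ^ ((1 : ℝ) / 2)) / (γ * (T : ℝ))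
        + L * γ * σ ^ 2 *
          (((T : ℝ) - 1 + β) ^ ((1 : ℝ) / 2) * Real.log ((T : ℝ) + 1 + β)) / (T : ℝ)
        + 2 * L * γ * σ ^ 2 * (((T : ℝ) + β) ^ ((1 : ℝ) / 2)) / (T : ℝ)) := by
  -- abbreviations
  set s : ℕ → ℝ := fun t => Real.sqrt ((t : ℝ) + β) with hs_def
  have hpos : ∀ t : ℕ, (0 : ℝ) < (t : ℝ) + β := by
    intro t; positivity
  have hs_pos : ∀ t : ℕ, 0 < s t := by
    intro t; exact Real.sqrt_pos.mpr (hpos t)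
  have hs_sq : ∀ t : ℕ, s t ^ 2 = (t : ℝ) + β := by
    intro t; exact Real.sq_sqrt (hpos t).le
  have hs_mono : ∀ a b : ℕ, a ≤ b → s a ≤ s b := by
    intro a b hab
    apply Real.sqrt_le_sqrt
    have : (a : ℝ) ≤ b := Nat.cast_le.mpr hab
    linarith
  have hη' : ∀ t : ℕ, η t = γ / s t := by
    intro t
    rw [hη t]
    simp only [hs_def, Real.sqrt_eq_rpow]
  have hη_pos : ∀ t : ℕ, 0 < η t := by
    intro t; rw [hη' t]; exact div_pos hγ (hs_pos t)
  have hη_sq : ∀ t : ℕ, η t ^ 2 = γ ^ 2 / ((t : ℝ) + β) := by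
    intro t; rw [hη' t, div_pow, hs_sq t]
  -- Sum of 1/(t+β)
  have hsum1 : ∀ k : ℕ, 1 ≤ k →
      ∑ t ∈ Finset.Icc 1 k, 1 / ((t : ℝ) + β) ≤
        1 / (1 + β) + Real.log ((k : ℝ) + β) - Real.log (1 + β) := by
    intro k hk
    induction k, hk using Nat.le_induction with
    | base =>
      simp [Finset.Icc_self]
    | succ k hk ih =>
      rw [Finset.sum_Icc_succ_top (by omega)]
      have hx : (0 : ℝ) < ((k : ℝ) + β) / ((k : ℝ) + 1 + β) :=
        div_pos (hpos k) (by linarith [hpos k])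
      have hlog := Real.log_le_sub_one_of_pos hx
      rw [Real.log_div (hpos k).ne' (by linarith [hpos k] : ((k:ℝ)+1+β) ≠ 0)] at hlog
      have he : ((k : ℝ) + β) / ((k : ℝ) + 1 + β) = 1 - 1 / ((k : ℝ) + 1 + β) := by
        field_simp <;> ring
      rw [he] at hlog
      have hcast : ((k + 1 : ℕ) : ℝ) = (k : ℝ) + 1 := by push_cast; ring
      rw [hcast]
      have : 1 / ((k : ℝ) + 1 + β) ≤ Real.log ((k : ℝ) + 1 + β) - Real.log ((k : ℝ) + β) := by
        linarith
      linarith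
  -- Sum of 1/s t
  have hsum2 : ∀ T : ℕ, ∑ t ∈ Finset.Icc 1 T, 1 / s t ≤ 2 * s T - 2 * Real.sqrt β := by
    intro T
    induction T with
    | zero =>
      rw [Finset.Icc_eq_empty (by omega)]
      simp [hs_def]
    | succ T ih =>
      rw [Finset.sum_Icc_succ_top (by omega)]
      have ha := hs_pos (T + 1)
      have hb := hs_pos T
      have hab : s T ≤ s (T + 1) := hs_mono T (T + 1) (by omega)
      have hsq1 := hs_sq (T + 1)
      have hsq2 := hs_sq T
      have hcast : ((T + 1 : ℕ) : ℝ) = (T : ℝ) + 1 := by push_cast; ring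
      rw [hcast] at hsq1
      have key : 1 / s (T + 1) ≤ 2 * s (T + 1) - 2 * s T := by
        rw [div_le_iff₀ ha]
        nlinarith [sq_nonneg (s (T + 1) - s T)]
      linarith
  -- summed recursion
  have hYsum : ∀ k : ℕ, 1 ≤ k →
      Y (k + 1) ≤ Y 1 + L * σ ^ 2 / 2 * ∑ t ∈ Finset.Icc 1 k, η t ^ 2 := by
    intro k hk
    induction k, hk using Nat.le_induction with
    | base =>
      have h := hrec 1 le_rfl
      have hz := hZ 1 le_rfl
      have hp := hη_pos 1
      simp only [Finset.Icc_self, Finset.sum_singleton]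
      nlinarith
    | succ k hk ih =>
      have h := hrec (k + 1) (by omega)
      have hz := hZ (k + 1) (by omega)
      have hp := hη_pos (k + 1)
      rw [Finset.sum_Icc_succ_top (by omega)]
      nlinarith
  -- part 1
  have part1 : ∀ k : ℕ, 1 ≤ k →
      Y (k + 1) ≤ Y 1 + L * σ ^ 2 * γ ^ 2 / (2 * (1 + β))
        + L * σ ^ 2 * γ ^ 2 / 2 * Real.log ((k : ℝ) + 2 + β) := by
    intro k hk
    have h1 := hYsum k hk
    have h2 : ∑ t ∈ Finset.Icc 1 k, η t ^ 2 =
        γ ^ 2 * ∑ t ∈ Finset.Icc 1 k, 1 / ((t : ℝ) + β) := by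
      rw [Finset.mul_sum]
      apply Finset.sum_congr rfl
      intro t _
      rw [hη_sq t]
      ring
    have h3 := hsum1 k hk
    have hlog1 : Real.log ((k : ℝ) + β) ≤ Real.log ((k : ℝ) + 2 + β) :=
      Real.log_le_log (hpos k) (by linarith)
    have hlog2 : 0 ≤ Real.log (1 + β) := Real.log_nonneg (by linarith)
    have hc : 0 ≤ L * σ ^ 2 / 2 := by positivity
    have hc2 : 0 < γ ^ 2 := by positivity
    have h4 : ∑ t ∈ Finset.Icc 1 k, 1 / ((t : ℝ) + β) ≤
        1 / (1 + β) + Real.log ((k : ℝ) + 2 + β) := by linarith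
    have h5 : L * σ ^ 2 / 2 * ∑ t ∈ Finset.Icc 1 k, η t ^ 2 ≤
        L * σ ^ 2 / 2 * (γ ^ 2 * (1 / (1 + β) + Real.log ((k : ℝ) + 2 + β))) := by
      rw [h2]
      apply mul_le_mul_of_nonneg_left _ hc
      apply mul_le_mul_of_nonneg_left h4 hc2.le
    have he : L * σ ^ 2 / 2 * (γ ^ 2 * (1 / (1 + β) + Real.log ((k : ℝ) + 2 + β))) =
        L * σ ^ 2 * γ ^ 2 / (2 * (1 + β)) + L * σ ^ 2 * γ ^ 2 / 2 * Real.log ((k : ℝ) + 2 + β) := by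
      have : (1 : ℝ) + β ≠ 0 := by linarith
      field_simp
    linarith [he ▸ h5]
  refine ⟨part1, ?_⟩
  -- part 2
  intro T hT
  set C : ℝ := Y 1 + L * σ ^ 2 * γ ^ 2 / (2 * (1 + β)) with hC_def
  set H : ℝ := L * σ ^ 2 * γ ^ 2 / 2 with hH_def
  set M : ℕ → ℝ := fun t => C + H * Real.log ((t : ℝ) + 1 + β) with hM_def
  have hH_nonneg : 0 ≤ H := by rw [hH_def]; positivity
  have hC_nonneg : 0 ≤ C := by
    rw [hC_def]
    have := hY 1 le_rfl
    have : (0:ℝ) ≤ L * σ ^ 2 * γ ^ 2 / (2 * (1 + β)) := by positivity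
    linarith [hY 1 le_rfl]
  have hM_nonneg : ∀ t : ℕ, 1 ≤ t → 0 ≤ M t := by
    intro t ht
    have : 0 ≤ Real.log ((t : ℝ) + 1 + β) := Real.log_nonneg (by
      have : (1 : ℝ) ≤ (t : ℝ) := by exact_mod_cast ht
      linarith)
    simp only [hM_def]
    nlinarith
  have hM_mono : ∀ a b : ℕ, a ≤ b → M a ≤ M b := by
    intro a b hab
    simp only [hM_def]
    have hc : (a : ℝ) ≤ (b : ℝ) := Nat.cast_le.mpr hab
    have : Real.log ((a : ℝ) + 1 + β) ≤ Real.log ((b : ℝ) + 1 + β) :=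
      Real.log_le_log (by positivity) (by linarith)
    nlinarith
  have hYM : ∀ t : ℕ, 2 ≤ t → Y t ≤ M t := by
    intro t ht
    obtain ⟨k, rfl⟩ : ∃ k, t = k + 1 := ⟨t - 1, by omega⟩
    have h := part1 k (by omega)
    simp only [hM_def]
    have hcast : ((k + 1 : ℕ) : ℝ) + 1 + β = (k : ℝ) + 2 + β := by push_cast; ring
    rw [hcast]
    exact h
  -- Abel summation bound
  have hAbel : ∀ T : ℕ, 1 ≤ T →
      ∑ t ∈ Finset.Icc 1 T, (Y t - Y (t + 1)) * s t ≤
        Y 1 * s 1 - Y (T + 1) * s T + M T * (s T - s 1) := by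
    intro T hT
    induction T, hT using Nat.le_induction with
    | base =>
      simp only [Finset.Icc_self, Finset.sum_singleton, sub_self, mul_zero, add_zero]
      ring_nf
      exact le_rfl
    | succ T hT' ih =>
      rw [Finset.sum_Icc_succ_top (by omega)]
      have h1 : Y (T + 1) ≤ M (T + 1) := hYM (T + 1) (by omega)
      have h2 : M T ≤ M (T + 1) := hM_mono T (T + 1) (by omega)
      have h3 : s T ≤ s (T + 1) := hs_mono T (T + 1) (by omega)
      have h4 : s 1 ≤ s T := hs_mono 1 T hT'
      nlinarith [mul_nonneg (sub_nonneg.mpr h1) (sub_nonneg.mpr h3),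
        mul_nonneg (sub_nonneg.mpr h2) (sub_nonneg.mpr h4)]
  -- per-term bound on Z
  have hZb : ∀ t : ℕ, 1 ≤ t →
      Z t ≤ 2 / γ * ((Y t - Y (t + 1)) * s t) + L * σ ^ 2 * γ * (1 / s t) := by
    intro t ht
    have h := hrec t ht
    rw [hη_sq t, hη' t] at h
    have hst := hs_pos t
    have h2 : γ / s t / 2 * Z t ≤ (Y t - Y (t + 1)) + L * σ ^ 2 / 2 * (γ ^ 2 / ((t : ℝ) + β)) := by
      linarith
    have h3 := mul_le_mul_of_nonneg_left h2 (by positivity : (0:ℝ) ≤ 2 * s t / γ)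
    have e1 : 2 * s t / γ * (γ / s t / 2 * Z t) = Z t := by
      field_simp
    have e2 : 2 * s t / γ * ((Y t - Y (t + 1)) + L * σ ^ 2 / 2 * (γ ^ 2 / ((t : ℝ) + β))) =
        2 / γ * ((Y t - Y (t + 1)) * s t) + L * σ ^ 2 * γ * (1 / s t) := by
      rw [← hs_sq t]
      field_simp
    rw [e1, e2] at h3
    exact h3
  -- sum the Z bound
  have hZsum : ∑ t ∈ Finset.Icc 1 T, Z t ≤
      2 / γ * ∑ t ∈ Finset.Icc 1 T, (Y t - Y (t + 1)) * s t
        + L * σ ^ 2 * γ * ∑ t ∈ Finset.Icc 1 T, 1 / s t := by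
    rw [Finset.mul_sum, Finset.mul_sum, ← Finset.sum_add_distrib]
    apply Finset.sum_le_sum
    intro t htmem
    have ht1 : 1 ≤ t := (Finset.mem_Icc.mp htmem).1
    exact hZb t ht1
  have hTpos : (0 : ℝ) < (T : ℝ) := by exact_mod_cast hT
  have hT1 : (1 : ℝ) ≤ (T : ℝ) := by exact_mod_cast hT
  -- bound s T - s 1 by sqrt (T - 1 + β)
  have hs1 : s 1 = Real.sqrt (1 + β) := by
    simp [hs_def]
  have hd_nonneg : (0:ℝ) ≤ (T : ℝ) - 1 + β := by linarith
  have hsd_sq : Real.sqrt ((T:ℝ) - 1 + β) ^ 2 = (T:ℝ) - 1 + β := Real.sq_sqrt hd_nonneg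
  have hsplit : s T - s 1 ≤ Real.sqrt ((T : ℝ) - 1 + β) := by
    have hb : (0:ℝ) ≤ 1 + β := by linarith
    have h1 : (T : ℝ) + β ≤ (Real.sqrt ((T:ℝ) - 1 + β) + Real.sqrt (1 + β)) ^ 2 := by
      nlinarith [Real.sq_sqrt hb, Real.sqrt_nonneg ((T:ℝ) - 1 + β), Real.sqrt_nonneg (1 + β),
        mul_nonneg (Real.sqrt_nonneg ((T:ℝ) - 1 + β)) (Real.sqrt_nonneg (1 + β))]
    have h2 := Real.sqrt_le_sqrt h1
    rw [Real.sqrt_sq (by positivity)] at h2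
    rw [hs1]
    have : s T = Real.sqrt ((T:ℝ) + β) := rfl
    rw [this]
    linarith
  -- combine
  have hYT1 : 0 ≤ Y (T + 1) := hY (T + 1) (by omega)
  have hMT := hM_nonneg T hT
  have hgpos : (0:ℝ) < 2 / γ := by positivity
  have hmain : ∑ t ∈ Finset.Icc 1 T, Z t ≤
      2 / γ * (Y 1 * s 1 + M T * Real.sqrt ((T : ℝ) - 1 + β)) + L * σ ^ 2 * γ * (2 * s T) := by
    have hA := hAbel T hT
    have hB := hsum2 T
    have hsb : 0 ≤ Real.sqrt β := Real.sqrt_nonneg β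
    have hstT := (hs_pos T).le
    have step1 : 2 / γ * ∑ t ∈ Finset.Icc 1 T, (Y t - Y (t + 1)) * s t ≤
        2 / γ * (Y 1 * s 1 + M T * Real.sqrt ((T : ℝ) - 1 + β)) := by
      apply mul_le_mul_of_nonneg_left _ hgpos.le
      have : M T * (s T - s 1) ≤ M T * Real.sqrt ((T : ℝ) - 1 + β) :=
        mul_le_mul_of_nonneg_left hsplit hMT
      nlinarith [mul_nonneg hYT1 hstT]
    have step2 : L * σ ^ 2 * γ * ∑ t ∈ Finset.Icc 1 T, 1 / s t ≤
        L * σ ^ 2 * γ * (2 * s T) := by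
      apply mul_le_mul_of_nonneg_left _ (by positivity)
      linarith
    linarith
  -- final algebra
  simp only [← Real.sqrt_eq_rpow]
  have hfin : 1 / (T : ℝ) * ∑ t ∈ Finset.Icc 1 T, Z t ≤
      1 / (T : ℝ) * (2 / γ * (Y 1 * s 1 + M T * Real.sqrt ((T : ℝ) - 1 + β))
        + L * σ ^ 2 * γ * (2 * s T)) := by
    apply mul_le_mul_of_nonneg_left hmain (by positivity)
  have heq : 1 / (T : ℝ) * (2 / γ * (Y 1 * s 1 + M T * Real.sqrt ((T : ℝ) - 1 + β))
        + L * σ ^ 2 * γ * (2 * s T)) =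
      2 * Real.sqrt (1 + β) * Y 1 / (γ * (T : ℝ))
        + 2 * C * Real.sqrt ((T : ℝ) - 1 + β) / (γ * (T : ℝ))
        + L * γ * σ ^ 2 *
          (Real.sqrt ((T : ℝ) - 1 + β) * Real.log ((T : ℝ) + 1 + β)) / (T : ℝ)
        + 2 * L * γ * σ ^ 2 * Real.sqrt ((T : ℝ) + β) / (T : ℝ) := by
    have hsT : s T = Real.sqrt ((T:ℝ) + β) := rfl
    rw [hs1, hsT]
    simp only [hM_def, hC_def, hH_def]
    have hβ1 : (1:ℝ) + β ≠ 0 := by positivity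
    field_simp
    ring
  rw [heq] at hfin
  exact hfin
end
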